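/- arXiv:1509.00727 — 5 statements merged into one kernel-verified Lean document; each statement's English description precedes it below -/
import Mathlib

section
/- Let X be a real-valued symmetric random variable with E|X|^{1+γ} ≤ M for some M > 1 and 0 < γ < 1. Let Ẽ_N[|X|] denote the empirical average of |X| over N i.i.d. samples. Then for any ε ∈ (0,1) and N ≥ (8M/ε)^{1/2 + 1/γ}, we have P(|Ẽ_N[|X|] − E|X|| > ε) ≤ 8M/(ε² N^{γ/3}). -/
open MeasureTheory ProbabilityTheory


private lemma stmt5_aux {n eps m1 mY sum : ℝ} (hn : 0 < n) (h1 : mY ≤ m1)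
    (h2 : m1 - mY ≤ eps / 2) (hw : eps < |sum / n - m1|) :
    n * eps / 2 ≤ |sum - n * mY| := by
  have h5 : sum - n * mY = n * (sum / n - mY) := by field_simp
  rw [h5, abs_mul, abs_of_pos hn]
  have h6 : eps / 2 ≤ |sum / n - mY| := by
    have h3 := abs_sub_le (sum / n) mY m1
    have h4 : |mY - m1| = |m1 - mY| := abs_sub_comm _ _
    have h7 : |m1 - mY| ≤ eps / 2 := abs_le.2 ⟨by linarith, by linarith⟩
    linarith
  calc n * eps / 2 = n * (eps / 2) := by ring
    _ ≤ n * |sum / n - mY| := mul_le_mul_of_nonneg_left h6 hn.le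

set_option maxHeartbeats 1600000 in
/-- Chebyshev-type bound for the empirical mean of `|X|` under a
`(1+γ)`-moment assumption, for a symmetric random variable. -/
theorem stmt5 {Ω : Type*} [MeasureSpace Ω] [IsProbabilityMeasure (volume : Measure Ω)]
    (γ M : ℝ) (hγ : 0 < γ) (hγ1 : γ < 1) (hM : 1 < M)
    (X : ℕ → Ω → ℝ) (hmeas : ∀ i, Measurable (X i))
    (hindep : iIndepFun X volume)
    (hident : ∀ i, Measure.map (X i) volume = Measure.map (X 0) volume)
    (hsymm : Measure.map (fun ω => -(X 0 ω)) volume = Measure.map (X 0) volume)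
    (hint : Integrable (fun ω => |X 0 ω| ^ (1 + γ)))
    (hmom : (∫ ω, |X 0 ω| ^ (1 + γ)) ≤ M)
    (ε : ℝ) (hε : ε ∈ Set.Ioo (0 : ℝ) 1)
    (N : ℕ) (hN : (8 * M / ε) ^ ((1 : ℝ) / 2 + 1 / γ) ≤ (N : ℝ)) :
    (volume {ω : Ω |
        abs ((∑ i ∈ Finset.range N, |X i ω|) / (N : ℝ) - ∫ ω', |X 0 ω'|) > ε}).toReal
      ≤ 8 * M / (ε ^ 2 * (N : ℝ) ^ (γ / 3)) := by
  obtain ⟨hε0, hε1⟩ := hε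
  have hM0 : (0:ℝ) < M := lt_trans one_pos hM
  have h8 : (1:ℝ) ≤ 8 * M / ε := by
    rw [le_div_iff₀ hε0]; nlinarith
  have hN1 : (1:ℝ) ≤ (N:ℝ) := le_trans (Real.one_le_rpow h8 (by positivity)) hN
  have hN0 : (0:ℝ) < (N:ℝ) := lt_of_lt_of_le one_pos hN1
  have hNγpos : (0:ℝ) < (N:ℝ) ^ γ := Real.rpow_pos_of_pos hN0 γ
  have hNγ3pos : (0:ℝ) < (N:ℝ) ^ (γ/3) := Real.rpow_pos_of_pos hN0 _
  have hNγ : 8 * M / ε ≤ (N:ℝ) ^ γ := by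
    have hexp : ((1:ℝ)/2 + 1/γ) * γ = γ/2 + 1 := by field_simp
    calc 8 * M / ε = (8 * M / ε) ^ (1:ℝ) := (Real.rpow_one _).symm
      _ ≤ (8 * M / ε) ^ (((1:ℝ)/2 + 1/γ) * γ) :=
          Real.rpow_le_rpow_of_exponent_le h8 (by rw [hexp]; linarith)
      _ = ((8 * M / ε) ^ ((1:ℝ)/2 + 1/γ)) ^ γ := Real.rpow_mul (by positivity) _ _
      _ ≤ (N:ℝ) ^ γ := Real.rpow_le_rpow (by positivity) hN hγ.le
  have hbias0 : M / (N:ℝ) ^ γ ≤ ε / 8 := by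
    rw [div_le_div_iff₀ hNγpos (by norm_num : (0:ℝ) < 8)]
    rw [div_le_iff₀ hε0] at hNγ
    nlinarith
  -- truncation
  set g : ℝ → ℝ := fun x => if |x| ≤ (N:ℝ) then |x| else 0 with hg
  have hgmeas : Measurable g :=
    Measurable.ite (measurableSet_le measurable_abs measurable_const) measurable_abs
      measurable_const
  have hg0 : ∀ x, 0 ≤ g x := by
    intro x; simp only [hg]; split_ifs <;> simp [abs_nonneg]
  have hgle : ∀ x, g x ≤ |x| := by
    intro x; simp only [hg]; split_ifs <;> simp [abs_nonneg]
  have hgN : ∀ x, g x ≤ (N:ℝ) := by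
    intro x; simp only [hg]; split_ifs with h
    · exact h
    · exact hN0.le
  set Y : ℕ → Ω → ℝ := fun i ω => g (X i ω) with hYdef
  have hYmeas : ∀ i, Measurable (Y i) := fun i => hgmeas.comp (hmeas i)
  have hYmem : ∀ i, MemLp (Y i) 2 volume := fun i =>
    memLp_of_bounded (Filter.Eventually.of_forall fun ω => ⟨hg0 _, hgN _⟩)
      (hYmeas i).aestronglyMeasurable 2
  have hmap : ∀ (i : ℕ) (f : ℝ → ℝ), Measurable f →
      (∫ ω, f (X i ω)) = ∫ ω, f (X 0 ω) := by
    intro i f hf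
    rw [← integral_map (hmeas i).aemeasurable hf.aestronglyMeasurable, hident i,
      integral_map (hmeas 0).aemeasurable hf.aestronglyMeasurable]
  have hEY : ∀ i, (∫ ω, Y i ω) = ∫ ω, Y 0 ω := fun i => hmap i g hgmeas
  have hEY2 : ∀ i, (∫ ω, (Y i ω) ^ 2) = ∫ ω, (Y 0 ω) ^ 2 := fun i =>
    hmap i (fun x => (g x) ^ 2) (hgmeas.pow_const 2)
  have hvar : ∀ i, variance (Y i) volume = variance (Y 0) volume := by
    intro i
    rw [variance_eq_sub (hYmem i), variance_eq_sub (hYmem 0)]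
    simp only [Pi.pow_apply]
    rw [hEY2 i, hEY i]
  -- second moment bound for truncated variable
  have hpt : ∀ ω, (Y 0 ω) ^ 2 ≤ (N:ℝ) ^ (1-γ) * |X 0 ω| ^ (1+γ) := by
    intro ω
    by_cases h : |X 0 ω| ≤ (N:ℝ)
    · have hY0 : Y 0 ω = |X 0 ω| := by simp only [hYdef, hg]; rw [if_pos h]
      rw [hY0]
      rcases eq_or_lt_of_le (abs_nonneg (X 0 ω)) with h0 | h0
      · rw [← h0]
        have : (0:ℝ) ^ (1+γ) = 0 := Real.zero_rpow (by linarith)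
        simp [this]
      · have h2 : |X 0 ω| ^ 2 = |X 0 ω| ^ ((1-γ) + (1+γ)) := by
          rw [show (1-γ) + (1+γ) = (2:ℝ) by ring]
          rw [show ((2:ℝ) : ℝ) = ((2:ℕ) : ℝ) by norm_num, Real.rpow_natCast]
        rw [h2, Real.rpow_add h0]
        have h3 : |X 0 ω| ^ (1-γ) ≤ (N:ℝ) ^ (1-γ) :=
          Real.rpow_le_rpow (abs_nonneg _) h (by linarith)
        have h4 : (0:ℝ) ≤ |X 0 ω| ^ (1+γ) := Real.rpow_nonneg (abs_nonneg _) _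
        nlinarith
    · have hY0 : Y 0 ω = 0 := by simp only [hYdef, hg]; rw [if_neg h]
      rw [hY0]
      have : (0:ℝ) ≤ |X 0 ω| ^ (1+γ) := Real.rpow_nonneg (abs_nonneg _) _
      have h5 : (0:ℝ) ≤ (N:ℝ) ^ (1-γ) := (Real.rpow_pos_of_pos hN0 _).le
      nlinarith
  have hY2le : (∫ ω, (Y 0 ω) ^ 2) ≤ (N:ℝ) ^ (1-γ) * M := by
    calc (∫ ω, (Y 0 ω) ^ 2) ≤ ∫ ω, (N:ℝ) ^ (1-γ) * |X 0 ω| ^ (1+γ) :=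
          integral_mono (hYmem 0).integrable_sq (hint.const_mul _) hpt
      _ = (N:ℝ) ^ (1-γ) * ∫ ω, |X 0 ω| ^ (1+γ) := integral_const_mul _ _
      _ ≤ (N:ℝ) ^ (1-γ) * M :=
          mul_le_mul_of_nonneg_left hmom (Real.rpow_pos_of_pos hN0 _).le
  -- sum
  set S : Ω → ℝ := ∑ i ∈ Finset.range N, Y i with hSdef
  have hSapp : ∀ ω, S ω = ∑ i ∈ Finset.range N, Y i ω := by
    intro ω; rw [hSdef]; exact Finset.sum_apply ω _ _
  have hSmem : MemLp S 2 volume := memLp_finset_sum' _ fun i _ => hYmem i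
  have hindepY : Set.Pairwise ↑(Finset.range N) fun i j => IndepFun (Y i) (Y j) volume := by
    intro i _ j _ hij
    exact (hindep.indepFun hij).comp hgmeas hgmeas
  have hvarS : variance S volume ≤ (N:ℝ) * ((N:ℝ) ^ (1-γ) * M) := by
    rw [hSdef, IndepFun.variance_sum (fun i _ => hYmem i) hindepY]
    have hb : variance (Y 0) volume ≤ (N:ℝ) ^ (1-γ) * M := by
      refine le_trans (le_trans (variance_le_expectation_sq (hYmeas 0).aestronglyMeasurable) ?_)
        hY2le
      simp only [Pi.pow_apply]; exact le_rfl
    calc (∑ i ∈ Finset.range N, variance (Y i) volume)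
        = ∑ _i ∈ Finset.range N, variance (Y 0) volume :=
          Finset.sum_congr rfl fun i _ => hvar i
      _ = (N:ℝ) * variance (Y 0) volume := by
          rw [Finset.sum_const, Finset.card_range, nsmul_eq_mul]
      _ ≤ (N:ℝ) * ((N:ℝ) ^ (1-γ) * M) := mul_le_mul_of_nonneg_left hb (Nat.cast_nonneg N)
  have hc : (0:ℝ) < (N:ℝ) * ε / 2 := by positivity
  have hcheb := meas_ge_le_variance_div_sq (μ := volume) hSmem hc
  have hNsplit : (N:ℝ) ^ (1-γ) * (N:ℝ) ^ γ = (N:ℝ) := by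
    rw [← Real.rpow_add hN0]; norm_num
  have hkey : (N:ℝ) * ((N:ℝ) ^ (1-γ) * M) / ((N:ℝ) * ε / 2) ^ 2 = 4 * M / (ε ^ 2 * (N:ℝ) ^ γ) := by
    field_simp
    linear_combination 4 * hNsplit
  have hchebR : (volume {ω | (N:ℝ) * ε / 2 ≤ |S ω - ∫ a, S a|}).toReal
      ≤ 4 * M / (ε ^ 2 * (N:ℝ) ^ γ) := by
    refine ENNReal.toReal_le_of_le_ofReal (by positivity) (le_trans hcheb ?_)
    apply ENNReal.ofReal_le_ofReal
    rw [← hkey]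
    gcongr
  -- integrability of |X 0|
  have hXabs_int : Integrable (fun ω => |X 0 ω|) := by
    have hgint : Integrable (fun ω => |X 0 ω| ^ (1+γ) + 1) := hint.add (integrable_const 1)
    apply Integrable.mono' hgint (hmeas 0).abs.aestronglyMeasurable
    filter_upwards with ω
    rw [Real.norm_eq_abs, abs_abs]
    rcases le_or_gt (|X 0 ω|) 1 with h | h
    · have := Real.rpow_nonneg (abs_nonneg (X 0 ω)) (1+γ); linarith
    · have h3 : |X 0 ω| ^ (1:ℝ) ≤ |X 0 ω| ^ (1+γ) :=
        Real.rpow_le_rpow_of_exponent_le h.le (by linarith)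
      rw [Real.rpow_one] at h3
      linarith
  have hY0int : Integrable (Y 0) := (hYmem 0).integrable one_le_two
  -- bias
  have hbias_nonneg : (∫ ω, Y 0 ω) ≤ ∫ ω, |X 0 ω| :=
    integral_mono hY0int hXabs_int fun ω => hgle _
  have hbias : (∫ ω, |X 0 ω|) - (∫ ω, Y 0 ω) ≤ ε / 2 := by
    have heq : (∫ ω, |X 0 ω|) - (∫ ω, Y 0 ω) = ∫ ω, (|X 0 ω| - Y 0 ω) :=
      (integral_sub hXabs_int hY0int).symm
    have hle : ∀ ω, |X 0 ω| - Y 0 ω ≤ |X 0 ω| ^ (1+γ) / (N:ℝ) ^ γ := by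
      intro ω
      by_cases h : |X 0 ω| ≤ (N:ℝ)
      · have hY0 : Y 0 ω = |X 0 ω| := by simp only [hYdef, hg]; rw [if_pos h]
        rw [hY0]
        have : (0:ℝ) ≤ |X 0 ω| ^ (1+γ) / (N:ℝ) ^ γ := by positivity
        linarith
      · have hY0 : Y 0 ω = 0 := by simp only [hYdef, hg]; rw [if_neg h]
        rw [hY0, sub_zero, le_div_iff₀ hNγpos]
        push_neg at h
        have h1 : (0:ℝ) < |X 0 ω| := lt_trans hN0 h
        have h2 : |X 0 ω| ^ (1+γ) = |X 0 ω| ^ (1:ℝ) * |X 0 ω| ^ γ := Real.rpow_add h1 1 γ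
        rw [h2, Real.rpow_one]
        exact mul_le_mul_of_nonneg_left (Real.rpow_le_rpow hN0.le h.le hγ.le) (abs_nonneg _)
    rw [heq]
    calc (∫ ω, (|X 0 ω| - Y 0 ω)) ≤ ∫ ω, |X 0 ω| ^ (1+γ) / (N:ℝ) ^ γ :=
          integral_mono (hXabs_int.sub hY0int) (hint.div_const _) hle
      _ = (∫ ω, |X 0 ω| ^ (1+γ)) / (N:ℝ) ^ γ := integral_div _ _
      _ ≤ M / (N:ℝ) ^ γ := by gcongr
      _ ≤ ε / 2 := le_trans hbias0 (by linarith)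
  -- tail bound
  have htail : ∀ i, (volume {ω | (N:ℝ) < |X i ω|}).toReal ≤ M / (N:ℝ) ^ (1+γ) := by
    intro i
    have hms : MeasurableSet {x : ℝ | (N:ℝ) < |x|} :=
      measurableSet_lt measurable_const measurable_abs
    have hset : {ω | (N:ℝ) < |X i ω|} = X i ⁻¹' {x | (N:ℝ) < |x|} := rfl
    rw [hset, ← Measure.map_apply (hmeas i) hms, hident i, Measure.map_apply (hmeas 0) hms]
    have hsub2 : X 0 ⁻¹' {x | (N:ℝ) < |x|} ⊆ {ω | (N:ℝ) ^ (1+γ) ≤ |X 0 ω| ^ (1+γ)} :=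
      fun ω hω => Real.rpow_le_rpow hN0.le (le_of_lt hω) (by linarith)
    have hmarkov := mul_meas_ge_le_integral_of_nonneg (μ := volume)
      (Filter.Eventually.of_forall fun ω => Real.rpow_nonneg (abs_nonneg (X 0 ω)) (1+γ))
      hint ((N:ℝ) ^ (1+γ))
    have hmono : (volume (X 0 ⁻¹' {x | (N:ℝ) < |x|})).toReal
        ≤ (volume {ω | (N:ℝ) ^ (1+γ) ≤ |X 0 ω| ^ (1+γ)}).toReal :=
      ENNReal.toReal_mono (measure_ne_top _ _) (measure_mono hsub2)
    have hp : (0:ℝ) < (N:ℝ) ^ (1+γ) := Real.rpow_pos_of_pos hN0 _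
    rw [le_div_iff₀ hp]
    simp only [measureReal_def] at hmarkov
    nlinarith [ENNReal.toReal_nonneg (a := volume (X 0 ⁻¹' {x | (N:ℝ) < |x|}))]
  -- expectation of S
  have hES : (∫ a, S a) = (N:ℝ) * ∫ ω, Y 0 ω := by
    have h1 : (∫ a, S a) = ∑ i ∈ Finset.range N, ∫ ω, Y i ω := by
      simp_rw [hSapp]
      exact integral_finset_sum _ fun i _ => (hYmem i).integrable one_le_two
    rw [h1]
    calc (∑ i ∈ Finset.range N, ∫ ω, Y i ω) = ∑ _i ∈ Finset.range N, ∫ ω, Y 0 ω :=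
        Finset.sum_congr rfl fun i _ => hEY i
      _ = (N:ℝ) * ∫ ω, Y 0 ω := by
        rw [Finset.sum_const, Finset.card_range, nsmul_eq_mul]
  -- inclusion
  have hincl : {ω : Ω |
      abs ((∑ i ∈ Finset.range N, |X i ω|) / (N : ℝ) - ∫ ω', |X 0 ω'|) > ε}
      ⊆ {ω | (N:ℝ) * ε / 2 ≤ |S ω - ∫ a, S a|}
        ∪ ⋃ i ∈ Finset.range N, {ω | (N:ℝ) < |X i ω|} := by
    intro ω hω
    by_cases hall : ∀ i ∈ Finset.range N, |X i ω| ≤ (N:ℝ)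
    · refine Set.mem_union_left _ ?_
      have hsum : S ω = ∑ i ∈ Finset.range N, |X i ω| := by
        rw [hSapp]
        refine Finset.sum_congr rfl fun i hi => ?_
        simp only [hYdef, hg]; rw [if_pos (hall i hi)]
      have hω' : ε < abs ((∑ i ∈ Finset.range N, |X i ω|) / (N : ℝ) - ∫ ω', |X 0 ω'|) := hω
      show (N:ℝ) * ε / 2 ≤ |S ω - ∫ x, S x|
      rw [hES, hsum]
      exact stmt5_aux hN0 hbias_nonneg hbias hω'
    · refine Set.mem_union_right _ ?_
      push_neg at hall
      obtain ⟨i, hi, hgt⟩ := hall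
      exact Set.mem_biUnion hi hgt
  -- assemble
  have hunion : volume {ω : Ω |
      abs ((∑ i ∈ Finset.range N, |X i ω|) / (N : ℝ) - ∫ ω', |X 0 ω'|) > ε}
      ≤ volume {ω | (N:ℝ) * ε / 2 ≤ |S ω - ∫ a, S a|}
        + ∑ i ∈ Finset.range N, volume {ω | (N:ℝ) < |X i ω|} :=
    le_trans (measure_mono hincl) (le_trans (measure_union_le _ _)
      (add_le_add_right (measure_biUnion_finset_le _ _) _))
  have hfin : (volume {ω | (N:ℝ) * ε / 2 ≤ |S ω - ∫ a, S a|}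
      + ∑ i ∈ Finset.range N, volume {ω | (N:ℝ) < |X i ω|}) ≠ ⊤ := by
    refine ENNReal.add_ne_top.2 ⟨measure_ne_top _ _, ?_⟩
    exact (ENNReal.sum_lt_top.2 fun i _ => measure_lt_top _ _).ne
  have hstep := ENNReal.toReal_mono hfin hunion
  rw [ENNReal.toReal_add (measure_ne_top _ _)
      (ENNReal.sum_lt_top.2 fun i _ => measure_lt_top _ _).ne,
    ENNReal.toReal_sum fun i _ => measure_ne_top _ _] at hstep
  have hNmul : (N:ℝ) * (M / (N:ℝ) ^ (1+γ)) = M / (N:ℝ) ^ γ := by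
    have h1 : (N:ℝ) ^ ((1:ℝ)+γ) = (N:ℝ) * (N:ℝ) ^ γ := by
      rw [Real.rpow_add hN0, Real.rpow_one]
    rw [h1, ← mul_div_assoc, mul_div_mul_left _ _ hN0.ne']
  have hfinal : 4 * M / (ε ^ 2 * (N:ℝ) ^ γ) + M / (N:ℝ) ^ γ
      ≤ 8 * M / (ε ^ 2 * (N:ℝ) ^ (γ/3)) := by
    set t := (N:ℝ) ^ (γ/3) with ht
    set s := (N:ℝ) ^ γ with hs
    have hts : t ≤ s := Real.rpow_le_rpow_of_exponent_le hN1 (by linarith)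
    have ht1 : (1:ℝ) ≤ t := Real.one_le_rpow hN1 (by positivity)
    have h1 : 4 * M / (ε ^ 2 * s) ≤ 4 * M / (ε ^ 2 * t) := by gcongr
    have h2 : M / s ≤ 4 * M / (ε ^ 2 * t) := by
      rw [div_le_div_iff₀ (by positivity) (by positivity)]
      have hε2 : ε ^ 2 ≤ 1 := by nlinarith
      have htpos : (0:ℝ) < t := lt_of_lt_of_le one_pos ht1
      nlinarith [mul_le_mul_of_nonneg_left hts hM0.le,
        mul_le_mul_of_nonneg_right hε2 (mul_pos hM0 htpos).le]
    have h3 : 8 * M / (ε ^ 2 * t) = 4 * M / (ε ^ 2 * t) + 4 * M / (ε ^ 2 * t) := by ring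
    linarith
  calc (volume {ω : Ω |
      abs ((∑ i ∈ Finset.range N, |X i ω|) / (N : ℝ) - ∫ ω', |X 0 ω'|) > ε}).toReal
      ≤ (volume {ω | (N:ℝ) * ε / 2 ≤ |S ω - ∫ a, S a|}).toReal
        + ∑ i ∈ Finset.range N, (volume {ω | (N:ℝ) < |X i ω|}).toReal := hstep
    _ ≤ 4 * M / (ε ^ 2 * (N:ℝ) ^ γ) + ∑ _i ∈ Finset.range N, M / (N:ℝ) ^ (1+γ) :=
        add_le_add hchebR (Finset.sum_le_sum fun i _ => htail i)
    _ = 4 * M / (ε ^ 2 * (N:ℝ) ^ γ) + (N:ℝ) * (M / (N:ℝ) ^ (1+γ)) := by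
        rw [Finset.sum_const, Finset.card_range, nsmul_eq_mul]
    _ = 4 * M / (ε ^ 2 * (N:ℝ) ^ γ) + M / (N:ℝ) ^ γ := by rw [hNmul]
    _ ≤ 8 * M / (ε ^ 2 * (N:ℝ) ^ (γ/3)) := hfinal
end

section
/- Let U be a family of n-dimensional product distributions, Ū its closure under invertible linear transformations, and Q a map assigning to each measure in Ū an n-dimensional distribution such that: (1) Q(μ) is absolutely symmetric for all μ ∈ U; (2) Q(Tμ) = T·Q(μ) for every invertible linear T; (3) cov(Q(μ)) is positive definite for all μ ∈ Ū. Then for any symmetric ICA model X = AS with the distribution of S in U, the matrix B = cov(Q(μ_X))^{-1/2} is an orthogonalizer of X, i.e., the columns of BA are orthogonal. -/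
open MeasureTheory ProbabilityTheory Matrix

lemma posDef_diag_pos {n : ℕ} {M : Matrix (Fin n) (Fin n) ℝ} (h : M.PosDef) (i : Fin n) :
    0 < M i i := by
  have h0 : (Pi.single i 1 : Fin n → ℝ) ≠ 0 := by
    intro hc; have := congrFun hc i; simp at this
  exact h.diag_pos

lemma meas_mulVec {n : ℕ} (A : Matrix (Fin n) (Fin n) ℝ) : Measurable A.mulVec := by
  apply measurable_pi_lambda
  intro i
  simp only [Matrix.mulVec, dotProduct]
  exact Finset.measurable_sum _ fun k _ => (measurable_pi_apply k).const_mul _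

/-- Mean vector of a measure on `ℝⁿ`. -/
noncomputable def meanVec {n : ℕ} (μ : Measure (Fin n → ℝ)) (i : Fin n) : ℝ :=
  ∫ x, x i ∂μ

/-- Covariance matrix of a measure on `ℝⁿ`. -/
noncomputable def covMatrix {n : ℕ} (μ : Measure (Fin n → ℝ)) :
    Matrix (Fin n) (Fin n) ℝ :=
  Matrix.of fun i j => ∫ x, (x i - meanVec μ i) * (x j - meanVec μ j) ∂μ

/-- if `Q` assigns to measures a distribution which is absolutely symmetric
on the family `U` of product distributions, is linearly equivariant, and has positive
definite covariance on the closure `Ū` of `U` under invertible linear maps, then for a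
symmetric ICA model `X = AS` with `μ_S ∈ U`, the matrix `B = cov(Q(μ_X))^{-1/2}`
orthogonalizes the columns of `A`. -/
theorem stmt8 {n : ℕ}
    (U : Set (Measure (Fin n → ℝ)))
    (hU : ∀ μ ∈ U, IsProbabilityMeasure μ ∧ ∃ ν : Fin n → Measure ℝ, μ = Measure.pi ν)
    (Ubar : Set (Measure (Fin n → ℝ)))
    (hUbar : Ubar = {μ' | ∃ μ ∈ U, ∃ T : Matrix (Fin n) (Fin n) ℝ,
      IsUnit T.det ∧ μ' = Measure.map T.mulVec μ})
    (Q : Measure (Fin n → ℝ) → Measure (Fin n → ℝ))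
    (hQ1 : ∀ μ ∈ U, ∀ ε : Fin n → ℝ, (∀ i, ε i = 1 ∨ ε i = -1) →
      Measure.map (fun x i => ε i * x i) (Q μ) = Q μ)
    (hQ2 : ∀ μ ∈ Ubar, ∀ T : Matrix (Fin n) (Fin n) ℝ, IsUnit T.det →
      Q (Measure.map T.mulVec μ) = Measure.map T.mulVec (Q μ))
    (hQ3 : ∀ μ ∈ Ubar, (covMatrix (Q μ)).PosDef)
    {Ω : Type*} [MeasureSpace Ω] [IsProbabilityMeasure (volume : Measure Ω)]
    (S : Ω → Fin n → ℝ) (hSmeas : Measurable S)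
    (hSU : Measure.map S volume ∈ U)
    (hSsym : Measure.map (fun ω => -(S ω)) volume = Measure.map S volume)
    (hSindep : iIndepFun (fun i ω => S ω i) volume)
    (A : Matrix (Fin n) (Fin n) ℝ) (hA : IsUnit A.det)
    (X : Ω → Fin n → ℝ) (hX : X = fun ω => A.mulVec (S ω))
    (B : Matrix (Fin n) (Fin n) ℝ) (hBsym : B.IsSymm) (hBpos : B.PosDef)
    (hBsq : B * B = (covMatrix (Q (Measure.map X volume)))⁻¹) :
    ∀ i j : Fin n, i ≠ j → ((B * A)ᵀ * (B * A)) i j = 0 := by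
  set μS := Measure.map S volume with hμSdef
  have hAm : Measurable A.mulVec := meas_mulVec A
  -- μS ∈ Ubar
  have hμS_Ubar : μS ∈ Ubar := by
    rw [hUbar]
    refine ⟨μS, hSU, 1, by simp, ?_⟩
    have h1 : (1 : Matrix (Fin n) (Fin n) ℝ).mulVec = id := funext fun v => Matrix.one_mulVec v
    rw [h1, Measure.map_id]
  -- μX
  have hμX : Measure.map X volume = Measure.map A.mulVec μS := by
    rw [hX, hμSdef]
    exact (Measure.map_map hAm hSmeas).symm
  set ν := Q μS with hνdef
  set ν' := Measure.map A.mulVec ν with hν'def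
  have hQX : Q (Measure.map X volume) = ν' := by
    rw [hμX]; exact hQ2 μS hμS_Ubar A hA
  -- symmetry facts
  have hflip : ∀ ε : Fin n → ℝ, (∀ i, ε i = 1 ∨ ε i = -1) →
      Measure.map (fun x i => ε i * x i) ν = ν := hQ1 μS hSU
  have hεm : ∀ ε : Fin n → ℝ,
      Measurable (fun (x : Fin n → ℝ) (i : Fin n) => ε i * x i) := fun ε =>
    measurable_pi_lambda _ fun i => (measurable_pi_apply i).const_mul _
  -- mean zero for ν
  have hmean : ∀ i, meanVec ν i = 0 := by
    intro i
    have hm : Measure.map (fun (x : Fin n → ℝ) (k : Fin n) => (-1 : ℝ) * x k) ν = ν :=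
      hflip (fun _ => -1) (fun _ => Or.inr rfl)
    have h1 : (∫ x, x i ∂ν) = ∫ x, -(x i) ∂ν := by
      calc (∫ x, x i ∂ν)
          = ∫ x, x i ∂(Measure.map (fun (x : Fin n → ℝ) (k : Fin n) => (-1 : ℝ) * x k) ν) := by
            rw [hm]
        _ = ∫ x, (fun k => (-1 : ℝ) * x k) i ∂ν :=
            integral_map (hεm (fun _ => -1)).aemeasurable
              (measurable_pi_apply i).aestronglyMeasurable
        _ = ∫ x, -(x i) ∂ν := by simp
    rw [integral_neg] at h1
    have : meanVec ν i = ∫ x, x i ∂ν := rfl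
    rw [this]; linarith
  -- off-diagonal moments vanish
  have hoff : ∀ i j : Fin n, i ≠ j → (∫ x, x i * x j ∂ν) = 0 := by
    intro i j hij
    set ε : Fin n → ℝ := fun k => if k = i then -1 else 1 with hεdef
    have hm : Measure.map (fun (x : Fin n → ℝ) (k : Fin n) => ε k * x k) ν = ν :=
      hflip ε (fun k => by by_cases h : k = i <;> simp [hεdef, h])
    have h1 : (∫ x, x i * x j ∂ν) = ∫ x, (ε i * x i) * (ε j * x j) ∂ν := by
      calc (∫ x, x i * x j ∂ν)
          = ∫ x, x i * x j ∂(Measure.map (fun (x : Fin n → ℝ) (k : Fin n) => ε k * x k) ν) := by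
            rw [hm]
        _ = ∫ x, (fun k => ε k * x k) i * (fun k => ε k * x k) j ∂ν :=
            integral_map (hεm ε).aemeasurable
              ((measurable_pi_apply i).mul (measurable_pi_apply j)).aestronglyMeasurable
    have hεi : ε i = -1 := if_pos rfl
    have hεj : ε j = 1 := if_neg (fun h => hij h.symm)
    rw [hεi, hεj] at h1
    have h2 : (fun x : Fin n → ℝ => (-1 * x i) * (1 * x j)) = fun x => -(x i * x j) := by
      funext x; ring
    rw [h2, integral_neg] at h1
    linarith
  -- covMatrix ν entries
  have hCν : ∀ i j, covMatrix ν i j = ∫ x, x i * x j ∂ν := by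
    intro i j
    simp [covMatrix, hmean]
  set d : Fin n → ℝ := fun k => ∫ x, x k * x k ∂ν with hddef
  have hPD : (covMatrix ν).PosDef := hQ3 μS hμS_Ubar
  have hdpos : ∀ k, 0 < d k := by
    intro k
    have := posDef_diag_pos hPD k
    rwa [hCν] at this
  have hint2 : ∀ k, Integrable (fun x => x k * x k) ν := by
    intro k
    by_contra h
    have := hdpos k
    rw [hddef] at this
    simp only at this
    rw [integral_undef h] at this
    exact lt_irrefl 0 this
  have hintkl : ∀ k l, Integrable (fun x => x k * x l) ν := by
    intro k l
    refine ((hint2 k).add (hint2 l)).mono'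
      ((measurable_pi_apply k).mul (measurable_pi_apply l)).aestronglyMeasurable ?_
    filter_upwards with x
    rw [Real.norm_eq_abs, abs_mul]
    simp only [Pi.add_apply]
    nlinarith [abs_nonneg (x k), abs_nonneg (x l), abs_mul_abs_self (x k),
      abs_mul_abs_self (x l), sq_nonneg (|x k| - |x l|)]
  -- ν' is symmetric under negation, hence mean zero
  have hnegν : Measure.map (fun x : Fin n → ℝ => -x) ν = ν := by
    have hm : Measure.map (fun (x : Fin n → ℝ) (k : Fin n) => (-1 : ℝ) * x k) ν = ν :=
      hflip (fun _ => -1) (fun _ => Or.inr rfl)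
    have h1 : (fun (x : Fin n → ℝ) (k : Fin n) => (-1 : ℝ) * x k) = fun x => -x := by
      funext x k; simp
    rwa [h1] at hm
  have hnegν' : Measure.map (fun x : Fin n → ℝ => -x) ν' = ν' := by
    rw [hν'def, Measure.map_map measurable_neg hAm]
    have h1 : ((fun x : Fin n → ℝ => -x) ∘ A.mulVec) = A.mulVec ∘ (fun x : Fin n → ℝ => -x) := by
      funext x; simp [Function.comp, Matrix.mulVec_neg]
    rw [h1, ← Measure.map_map hAm measurable_neg, hnegν]
  have hmean' : ∀ i, meanVec ν' i = 0 := by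
    intro i
    have h1 : (∫ y, y i ∂ν') = ∫ y, -(y i) ∂ν' := by
      calc (∫ y, y i ∂ν')
          = ∫ y, y i ∂(Measure.map (fun x : Fin n → ℝ => -x) ν') := by rw [hnegν']
        _ = ∫ y, (-y) i ∂ν' :=
            integral_map measurable_neg.aemeasurable
              (measurable_pi_apply i).aestronglyMeasurable
        _ = ∫ y, -(y i) ∂ν' := by simp
    rw [integral_neg] at h1
    have : meanVec ν' i = ∫ y, y i ∂ν' := rfl
    rw [this]; linarith
  -- covariance of ν'
  have hCν' : ∀ i j, covMatrix ν' i j = ∑ k, ∑ l, A i k * A j l * ∫ x, x k * x l ∂ν := by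
    intro i j
    have e1 : covMatrix ν' i j = ∫ y, y i * y j ∂ν' := by
      simp [covMatrix, hmean']
    have e2 : (∫ y, y i * y j ∂ν') = ∫ x, (A.mulVec x i) * (A.mulVec x j) ∂ν :=
      integral_map hAm.aemeasurable
        ((measurable_pi_apply i).mul (measurable_pi_apply j)).aestronglyMeasurable
    have e3 : ∀ x : Fin n → ℝ,
        (A.mulVec x i) * (A.mulVec x j) = ∑ k, ∑ l, A i k * A j l * (x k * x l) := by
      intro x
      simp only [Matrix.mulVec, dotProduct]
      rw [Finset.sum_mul_sum]
      exact Finset.sum_congr rfl fun k _ => Finset.sum_congr rfl fun l _ => by ring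
    rw [e1, e2]
    simp_rw [e3]
    rw [integral_finset_sum _ (fun k _ =>
      integrable_finset_sum _ (fun l _ => (hintkl k l).const_mul _))]
    refine Finset.sum_congr rfl fun k _ => ?_
    rw [integral_finset_sum _ (fun l _ => (hintkl k l).const_mul _)]
    exact Finset.sum_congr rfl fun l _ => integral_const_mul _ _
  have hCν'eq : covMatrix ν' = A * Matrix.diagonal d * Aᵀ := by
    ext i j
    rw [hCν' i j]
    have h2 : (A * Matrix.diagonal d * Aᵀ) i j = ∑ k, A i k * d k * A j k := by
      rw [Matrix.mul_apply]
      exact Finset.sum_congr rfl fun k _ => by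
        rw [Matrix.mul_diagonal, Matrix.transpose_apply]
    rw [h2]
    refine Finset.sum_congr rfl fun k _ => ?_
    rw [Finset.sum_eq_single k]
    · rw [hddef]; ring
    · intro l _ hlk
      rw [hoff k l (Ne.symm hlk)]; ring
    · intro h; exact absurd (Finset.mem_univ k) h
  -- invert the diagonal
  have hDinv : (Matrix.diagonal d)⁻¹ = Matrix.diagonal (fun k => (d k)⁻¹) := by
    apply Matrix.inv_eq_right_inv
    rw [Matrix.diagonal_mul_diagonal]
    have : (fun k => d k * (d k)⁻¹) = fun _ => (1 : ℝ) :=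
      funext fun k => mul_inv_cancel₀ (hdpos k).ne'
    rw [this, Matrix.diagonal_one]
  have hAT : IsUnit Aᵀ.det := by rwa [Matrix.det_transpose]
  have key : (B * A)ᵀ * (B * A) = Matrix.diagonal (fun k => (d k)⁻¹) := by
    rw [Matrix.transpose_mul, hBsym]
    have h1 : Aᵀ * B * (B * A) = Aᵀ * (B * B) * A := by
      rw [Matrix.mul_assoc, ← Matrix.mul_assoc B B A, ← Matrix.mul_assoc]
    rw [h1, hBsq, hQX, hCν'eq, Matrix.mul_inv_rev, Matrix.mul_inv_rev]
    simp only [← Matrix.mul_assoc]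
    rw [Matrix.mul_nonsing_inv _ hAT, Matrix.one_mul, Matrix.mul_assoc,
      Matrix.nonsing_inv_mul _ hA, Matrix.mul_one, hDinv]
  intro i j hij
  rw [key]
  exact Matrix.diagonal_apply_ne _ hij
end

section
/- Let X = AS be a symmetric ICA model with 0 < E|S_i| < ∞ for all i, and let Y be uniformly distributed in the centroid body ΓX. Then cov(Y)^{-1/2} is an orthogonalizer of X, i.e., the columns of cov(Y)^{-1/2}·A are orthogonal. -/
open MeasureTheory ProbabilityTheory Matrix

/-- The centroid body of a random vector `X : Ω → ℝⁿ` with finite first moment: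
the convex set with support function `u ↦ E|⟨u,X⟩|`. -/
noncomputable def centroidBody {n : ℕ} {Ω : Type*} [MeasureSpace Ω]
    (X : Ω → Fin n → ℝ) : Set (Fin n → ℝ) :=
  {x | ∀ u : Fin n → ℝ, x ⬝ᵥ u ≤ ∫ ω, |X ω ⬝ᵥ u|}

lemma joint_eq_pi {n : ℕ} {Ω : Type*} [MeasureSpace Ω] [IsProbabilityMeasure (volume : Measure Ω)]
    (S : Ω → Fin n → ℝ) (hSmeas : Measurable S)
    (hSindep : iIndepFun (fun i ω => S ω i) volume) :
    Measure.map S volume = Measure.pi (fun i => Measure.map (fun ω => S ω i) volume) := by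
  have hmi : ∀ i : Fin n, Measurable (fun ω => S ω i) := fun i =>
    (measurable_pi_apply i).comp hSmeas
  haveI : ∀ i : Fin n, IsProbabilityMeasure (Measure.map (fun ω => S ω i) volume) :=
    fun i => Measure.isProbabilityMeasure_map (hmi i).aemeasurable
  refine (Measure.pi_eq fun s hs => ?_).symm
  rw [Measure.map_apply hSmeas (MeasurableSet.univ_pi hs)]
  have : S ⁻¹' (Set.pi Set.univ s) = ⋂ i ∈ Finset.univ, (fun ω => S ω i) ⁻¹' s i := by
    ext ω; simp [Set.mem_pi]
  rw [this, hSindep.measure_inter_preimage_eq_mul Finset.univ (fun i _ => hs i)]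
  exact Finset.prod_congr rfl fun i _ =>
    (Measure.map_apply (hmi i) (hs i)).symm

lemma marg_sym {n : ℕ} {Ω : Type*} [MeasureSpace Ω]
    (S : Ω → Fin n → ℝ) (hSmeas : Measurable S)
    (hSsym : Measure.map (fun ω => -(S ω)) volume = Measure.map S volume) (i : Fin n) :
    Measure.map (fun ω => -(S ω i)) volume = Measure.map (fun ω => S ω i) volume := by
  have h1 : Measurable fun x : Fin n → ℝ => x i := measurable_pi_apply i
  have := congrArg (Measure.map (fun x : Fin n → ℝ => x i)) hSsym
  rwa [Measure.map_map (f := fun ω => -(S ω)) h1 hSmeas.neg, Measure.map_map h1 hSmeas] at this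

lemma flip_law {n : ℕ} {Ω : Type*} [MeasureSpace Ω] [IsProbabilityMeasure (volume : Measure Ω)]
    (S : Ω → Fin n → ℝ) (hSmeas : Measurable S)
    (hSsym : Measure.map (fun ω => -(S ω)) volume = Measure.map S volume)
    (hSindep : iIndepFun (fun i ω => S ω i) volume)
    (i : Fin n) :
    Measure.map (fun ω k => (if k = i then -(1:ℝ) else 1) * S ω k) volume
      = Measure.map S volume := by
  set T : Ω → Fin n → ℝ := fun ω k => (if k = i then -(1:ℝ) else 1) * S ω k with hT
  have hTmeas : Measurable T := by
    apply measurable_pi_lambda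
    intro k
    exact (measurable_const.mul ((measurable_pi_apply k).comp hSmeas))
  have hTindep : iIndepFun (fun k ω => T ω k) volume := by
    have := hSindep.comp (g := fun k (c : ℝ) => (if k = i then -(1:ℝ) else 1) * c)
      (fun k => measurable_const.mul measurable_id)
    exact this
  have hTmarg : ∀ k, Measure.map (fun ω => T ω k) volume
      = Measure.map (fun ω => S ω k) volume := by
    intro k
    by_cases hk : k = i
    · subst hk
      have : (fun ω => T ω k) = fun ω => -(S ω k) := by
        funext ω; simp [hT]
      rw [this]
      exact marg_sym S hSmeas hSsym k
    · simp only [hT, if_neg hk, one_mul]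
  rw [joint_eq_pi T hTmeas hTindep, joint_eq_pi S hSmeas hSindep]
  exact congrArg Measure.pi (funext hTmarg)

lemma continuous_dotProduct {n : ℕ} (v : Fin n → ℝ) :
    Continuous fun x : Fin n → ℝ => x ⬝ᵥ v := by
  unfold dotProduct
  exact continuous_finset_sum _ fun i _ => (continuous_apply i).mul continuous_const

lemma centroid_measurable {n : ℕ} {Ω : Type*} [MeasureSpace Ω] (X : Ω → Fin n → ℝ) :
    MeasurableSet (centroidBody X) := by
  have : centroidBody X = ⋂ u : Fin n → ℝ, {x | x ⬝ᵥ u ≤ ∫ ω, |X ω ⬝ᵥ u|} := by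
    ext x; simp [centroidBody, Set.mem_iInter]
  rw [this]
  exact (isClosed_iInter fun u =>
    isClosed_le (continuous_dotProduct u) continuous_const).measurableSet

lemma centroid_coord_bound {n : ℕ} {Ω : Type*} [MeasureSpace Ω] (X : Ω → Fin n → ℝ)
    {x : Fin n → ℝ} (hx : x ∈ centroidBody X) (i : Fin n) :
    |x i| ≤ ∫ ω, |X ω ⬝ᵥ Pi.single i 1| := by
  rw [abs_le]
  constructor
  · have h := hx (-(Pi.single i 1))
    have h1 : x ⬝ᵥ -(Pi.single i 1) = -(x i) := by
      rw [dotProduct_neg, dotProduct_single, mul_one]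
    have h2 : (fun ω => |X ω ⬝ᵥ -(Pi.single i 1)|) = fun ω => |X ω ⬝ᵥ Pi.single i 1| := by
      funext ω; rw [dotProduct_neg, abs_neg]
    rw [h1, h2] at h
    linarith
  · have h := hx (Pi.single i 1)
    rwa [dotProduct_single, mul_one] at h

lemma dot_aux {n : ℕ} (M : Matrix (Fin n) (Fin n) ℝ) (y u : Fin n → ℝ) :
    M.mulVec y ⬝ᵥ u = y ⬝ᵥ Mᵀ.mulVec u := by
  rw [dotProduct_comm, Matrix.dotProduct_mulVec, ← Matrix.mulVec_transpose,
    dotProduct_comm]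

lemma dot_flip_int_eq {n : ℕ} {Ω : Type*} [MeasureSpace Ω]
    [IsProbabilityMeasure (volume : Measure Ω)]
    (S : Ω → Fin n → ℝ) (hSmeas : Measurable S)
    (hSsym : Measure.map (fun ω => -(S ω)) volume = Measure.map S volume)
    (hSindep : iIndepFun (fun i ω => S ω i) volume)
    (i : Fin n) (v : Fin n → ℝ) :
    ∫ ω, |(fun k => (if k = i then -(1:ℝ) else 1) * S ω k) ⬝ᵥ v| = ∫ ω, |S ω ⬝ᵥ v| := by
  set T : Ω → Fin n → ℝ := fun ω k => (if k = i then -(1:ℝ) else 1) * S ω k with hT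
  have hTmeas : Measurable T := by
    apply measurable_pi_lambda
    intro k
    exact (measurable_const.mul ((measurable_pi_apply k).comp hSmeas))
  have hcont : Continuous fun y : Fin n → ℝ => |y ⬝ᵥ v| :=
    continuous_abs.comp (continuous_dotProduct v)
  have h1 : ∫ ω, |T ω ⬝ᵥ v| = ∫ y, |y ⬝ᵥ v| ∂(Measure.map T volume) :=
    (integral_map hTmeas.aemeasurable hcont.aestronglyMeasurable).symm
  have h2 : ∫ ω, |S ω ⬝ᵥ v| = ∫ y, |y ⬝ᵥ v| ∂(Measure.map S volume) :=
    (integral_map hSmeas.aemeasurable hcont.aestronglyMeasurable).symm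
  rw [h1, h2, flip_law S hSmeas hSsym hSindep i]

lemma centroid_flip_mem {n : ℕ} {Ω : Type*} [MeasureSpace Ω]
    [IsProbabilityMeasure (volume : Measure Ω)]
    (S : Ω → Fin n → ℝ) (hSmeas : Measurable S)
    (hSsym : Measure.map (fun ω => -(S ω)) volume = Measure.map S volume)
    (hSindep : iIndepFun (fun i ω => S ω i) volume)
    (A : Matrix (Fin n) (Fin n) ℝ) (hA : IsUnit A.det)
    (X : Ω → Fin n → ℝ) (hX : X = fun ω => A.mulVec (S ω))
    (i : Fin n) {x : Fin n → ℝ} (hx : x ∈ centroidBody X) :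
    (A * Matrix.diagonal (fun k => if k = i then (-1:ℝ) else 1) * A⁻¹).mulVec x
      ∈ centroidBody X := by
  set F : Matrix (Fin n) (Fin n) ℝ := Matrix.diagonal (fun k => if k = i then (-1:ℝ) else 1)
    with hF
  set R : Matrix (Fin n) (Fin n) ℝ := A * F * A⁻¹ with hR
  intro u
  rw [dot_aux]
  refine le_trans (hx (Rᵀ.mulVec u)) (le_of_eq ?_)
  have key : ∀ ω, X ω ⬝ᵥ Rᵀ.mulVec u
      = (fun k => (if k = i then -(1:ℝ) else 1) * S ω k) ⬝ᵥ (Aᵀ.mulVec u) := by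
    intro ω
    rw [← dot_aux]
    have h1 : R.mulVec (X ω) = A.mulVec (fun k => (if k = i then -(1:ℝ) else 1) * S ω k) := by
      rw [hX]
      simp only
      rw [Matrix.mulVec_mulVec, hR]
      have : A * F * A⁻¹ * A = A * F := by
        rw [Matrix.mul_assoc (A * F), Matrix.nonsing_inv_mul A hA, Matrix.mul_one]
      rw [this, ← Matrix.mulVec_mulVec]
      have hFv : F.mulVec (S ω) = fun k => (if k = i then -(1:ℝ) else 1) * S ω k := by
        funext k; rw [hF, Matrix.mulVec_diagonal]
      rw [hFv]
    rw [h1, dot_aux]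
  have key2 : ∀ ω, X ω ⬝ᵥ u = S ω ⬝ᵥ (Aᵀ.mulVec u) := by
    intro ω
    rw [hX]
    simp only
    rw [dot_aux]
  calc ∫ ω, |X ω ⬝ᵥ Rᵀ.mulVec u|
      = ∫ ω, |(fun k => (if k = i then -(1:ℝ) else 1) * S ω k) ⬝ᵥ (Aᵀ.mulVec u)| := by
        simp_rw [key]
    _ = ∫ ω, |S ω ⬝ᵥ (Aᵀ.mulVec u)| := dot_flip_int_eq S hSmeas hSsym hSindep i _
    _ = ∫ ω, |X ω ⬝ᵥ u| := by simp_rw [key2]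

lemma continuous_mulVec {n : ℕ} (M : Matrix (Fin n) (Fin n) ℝ) :
    Continuous fun x : Fin n → ℝ => M.mulVec x := by
  apply continuous_pi
  intro k
  have : (fun x : Fin n → ℝ => M.mulVec x k) = fun x => x ⬝ᵥ M k := by
    funext x; rw [Matrix.mulVec, dotProduct_comm]
  rw [this]
  exact continuous_dotProduct (M k)

lemma flip_sq {n : ℕ} (i : Fin n) :
    (Matrix.diagonal (fun k => if k = i then (-1:ℝ) else 1)) *
      (Matrix.diagonal (fun k => if k = i then (-1:ℝ) else 1)) = 1 := by
  rw [Matrix.diagonal_mul_diagonal]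
  have : (fun k => (if k = i then (-1:ℝ) else 1) * (if k = i then (-1:ℝ) else 1))
      = fun _ : Fin n => (1:ℝ) := by
    funext k; by_cases hk : k = i <;> simp [hk]
  rw [this, Matrix.diagonal_one]

lemma R_invol {n : ℕ} (A : Matrix (Fin n) (Fin n) ℝ) (hA : IsUnit A.det) (i : Fin n) :
    (A * Matrix.diagonal (fun k => if k = i then (-1:ℝ) else 1) * A⁻¹) *
      (A * Matrix.diagonal (fun k => if k = i then (-1:ℝ) else 1) * A⁻¹) = 1 := by
  set F : Matrix (Fin n) (Fin n) ℝ := Matrix.diagonal (fun k => if k = i then (-1:ℝ) else 1)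
  calc (A * F * A⁻¹) * (A * F * A⁻¹) = A * F * (A⁻¹ * A) * F * A⁻¹ := by
        simp only [Matrix.mul_assoc]
    _ = A * (F * F) * A⁻¹ := by rw [Matrix.nonsing_inv_mul A hA]; simp only [Matrix.mul_assoc,
        Matrix.one_mul]
    _ = 1 := by rw [flip_sq, Matrix.mul_one, Matrix.mul_nonsing_inv A hA]

lemma map_R_volume {n : ℕ} (A : Matrix (Fin n) (Fin n) ℝ) (hA : IsUnit A.det) (i : Fin n) :
    Measure.map ((A * Matrix.diagonal (fun k => if k = i then (-1:ℝ) else 1) * A⁻¹).mulVec)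
      (volume : Measure (Fin n → ℝ)) = volume := by
  set F : Matrix (Fin n) (Fin n) ℝ := Matrix.diagonal (fun k => if k = i then (-1:ℝ) else 1)
    with hF
  set R : Matrix (Fin n) (Fin n) ℝ := A * F * A⁻¹ with hR
  have hFdet : F.det = -1 := by
    rw [hF, Matrix.det_diagonal]
    rw [Finset.prod_ite_eq' Finset.univ i (fun _ => (-1:ℝ))]
    simp
  have hAdet : A.det ≠ 0 := by
    intro h; rw [h] at hA; exact (by simpa using hA : ¬ IsUnit (0:ℝ)) hA |>.elim
  have hRdet : R.det = -1 := by
    rw [hR, Matrix.det_mul, Matrix.det_mul, hFdet, Matrix.det_nonsing_inv]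
    field_simp [Ring.inverse_eq_inv']
    rw [Ring.inverse_eq_inv', mul_inv_cancel₀ hAdet]
  have h1 : LinearMap.det (Matrix.toLin' R) = -1 := by
    rw [LinearMap.det_toLin']; exact hRdet
  have h2 := Real.map_linearMap_volume_pi_eq_smul_volume_pi (f := Matrix.toLin' R)
    (by rw [h1]; norm_num)
  rw [h1] at h2
  have h3 : ⇑(Matrix.toLin' R) = R.mulVec := by funext x; exact Matrix.toLin'_apply R x
  rw [h3] at h2
  rw [h2]
  norm_num

lemma map_R_mu {n : ℕ} {Ω : Type*} [MeasureSpace Ω]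
    [IsProbabilityMeasure (volume : Measure Ω)]
    (S : Ω → Fin n → ℝ) (hSmeas : Measurable S)
    (hSsym : Measure.map (fun ω => -(S ω)) volume = Measure.map S volume)
    (hSindep : iIndepFun (fun i ω => S ω i) volume)
    (A : Matrix (Fin n) (Fin n) ℝ) (hA : IsUnit A.det)
    (X : Ω → Fin n → ℝ) (hX : X = fun ω => A.mulVec (S ω))
    (Y : Ω → Fin n → ℝ)
    (hY : Measure.map Y volume
      = (volume (centroidBody X))⁻¹ • volume.restrict (centroidBody X))
    (i : Fin n) :
    Measure.map ((A * Matrix.diagonal (fun k => if k = i then (-1:ℝ) else 1) * A⁻¹).mulVec)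
      (Measure.map Y volume) = Measure.map Y volume := by
  set F : Matrix (Fin n) (Fin n) ℝ := Matrix.diagonal (fun k => if k = i then (-1:ℝ) else 1)
    with hF
  set R : Matrix (Fin n) (Fin n) ℝ := A * F * A⁻¹ with hR
  set K := centroidBody X with hKdef
  have hK : MeasurableSet K := centroid_measurable X
  have hRmeas : Measurable R.mulVec := (continuous_mulVec R).measurable
  have hpre : R.mulVec ⁻¹' K = K := by
    ext x
    constructor
    · intro hx
      have h2 := centroid_flip_mem S hSmeas hSsym hSindep A hA X hX i hx
      rw [Matrix.mulVec_mulVec] at h2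
      have hiv : R * R = 1 := R_invol A hA i
      rw [hiv, Matrix.one_mulVec] at h2
      exact h2
    · intro hx
      exact centroid_flip_mem S hSmeas hSsym hSindep A hA X hX i hx
  have hres : Measure.map R.mulVec (volume.restrict K) = volume.restrict K := by
    have h := Measure.restrict_map hRmeas hK (μ := (volume : Measure (Fin n → ℝ)))
    rw [map_R_volume A hA i, hpre] at h
    exact h.symm
  rw [hY, Measure.map_smul, hres]

lemma cov_invariant {n : ℕ} (μ : Measure (Fin n → ℝ)) [IsProbabilityMeasure μ]
    (M : Fin n → ℝ) (hbound : ∀ᵐ x ∂μ, ∀ k, |x k| ≤ M k)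
    (R : Matrix (Fin n) (Fin n) ℝ)
    (hinv : Measure.map R.mulVec μ = μ) :
    covMatrix μ = R * covMatrix μ * Rᵀ := by
  set m := meanVec μ with hm
  have hint1 : ∀ k, Integrable (fun x : Fin n → ℝ => x k) μ := by
    intro k
    refine Integrable.mono' (integrable_const (M k))
      ((measurable_pi_apply k).aestronglyMeasurable) ?_
    filter_upwards [hbound] with x hx
    simpa [Real.norm_eq_abs] using hx k
  have hdev_int : ∀ k l, Integrable (fun x : Fin n → ℝ => (x k - m k) * (x l - m l)) μ := by
    intro k l
    refine Integrable.mono' (integrable_const ((M k + |m k|) * (M l + |m l|)))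
      (((measurable_pi_apply k).sub measurable_const).mul
        ((measurable_pi_apply l).sub measurable_const)).aestronglyMeasurable ?_
    filter_upwards [hbound] with x hx
    rw [Real.norm_eq_abs, abs_mul]
    have h1 : |x k - m k| ≤ M k + |m k| := (abs_sub _ _).trans (by linarith [hx k])
    have h2 : |x l - m l| ≤ M l + |m l| := (abs_sub _ _).trans (by linarith [hx l])
    exact mul_le_mul h1 h2 (abs_nonneg _) ((abs_nonneg _).trans h1)
  have hcv : ∀ f : (Fin n → ℝ) → ℝ, AEStronglyMeasurable f μ →
      ∫ x, f x ∂μ = ∫ x, f (R.mulVec x) ∂μ := by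
    intro f hf
    have hf' : AEStronglyMeasurable f (Measure.map R.mulVec μ) := by rw [hinv]; exact hf
    conv_lhs => rw [← hinv]
    exact integral_map (continuous_mulVec R).measurable.aemeasurable hf'
  have happly : ∀ (x : Fin n → ℝ) (i0 : Fin n), R.mulVec x i0 = ∑ k, R i0 k * x k := by
    intro x i0; rfl
  have hmean : ∀ i0, m i0 = ∑ k, R i0 k * m k := by
    intro i0
    have h1 : m i0 = ∫ x, x i0 ∂μ := rfl
    rw [h1, hcv (fun x => x i0) (measurable_pi_apply i0).aestronglyMeasurable]
    simp_rw [happly]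
    rw [integral_finset_sum _ (fun k _ => (hint1 k).const_mul _)]
    exact Finset.sum_congr rfl fun k _ => integral_const_mul _ _
  ext i0 j0
  have hC : ∀ a b : Fin n, covMatrix μ a b = ∫ x, (x a - m a) * (x b - m b) ∂μ := fun a b => rfl
  rw [Matrix.mul_apply, hC]
  have hmeasf : AEStronglyMeasurable (fun x : Fin n → ℝ => (x i0 - m i0) * (x j0 - m j0)) μ :=
    (((measurable_pi_apply i0).sub measurable_const).mul
      ((measurable_pi_apply j0).sub measurable_const)).aestronglyMeasurable
  rw [hcv _ hmeasf]
  have hexp : ∀ x : Fin n → ℝ,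
      (R.mulVec x i0 - m i0) * (R.mulVec x j0 - m j0)
        = ∑ k, ∑ l, (R i0 k * R j0 l) * ((x k - m k) * (x l - m l)) := by
    intro x
    have e1 : R.mulVec x i0 - m i0 = ∑ k, R i0 k * (x k - m k) := by
      rw [happly, hmean i0, ← Finset.sum_sub_distrib]
      exact Finset.sum_congr rfl fun k _ => by ring
    have e2 : R.mulVec x j0 - m j0 = ∑ l, R j0 l * (x l - m l) := by
      rw [happly, hmean j0, ← Finset.sum_sub_distrib]
      exact Finset.sum_congr rfl fun l _ => by ring
    rw [e1, e2, Finset.sum_mul_sum]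
    exact Finset.sum_congr rfl fun k _ => Finset.sum_congr rfl fun l _ => by ring
  simp_rw [hexp]
  rw [integral_finset_sum _ (fun k _ => by
    exact integrable_finset_sum _ (fun l _ => ((hdev_int k l).const_mul _)))]
  have : ∀ k, (∫ x, ∑ l, (R i0 k * R j0 l) * ((x k - m k) * (x l - m l)) ∂μ)
      = ∑ l, (R i0 k * R j0 l) * covMatrix μ k l := by
    intro k
    rw [integral_finset_sum _ (fun l _ => ((hdev_int k l).const_mul _))]
    exact Finset.sum_congr rfl fun l _ => by rw [integral_const_mul, hC]
  simp_rw [this]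
  rw [Finset.sum_comm]
  refine Finset.sum_congr rfl fun l _ => ?_
  rw [Matrix.mul_apply, Finset.sum_mul]
  refine Finset.sum_congr rfl fun k _ => ?_
  rw [Matrix.transpose_apply]
  ring

/-- for a symmetric ICA model `X = AS` with `0 < E|S_i| < ∞`, if `Y` is
uniformly distributed in the centroid body `Γ X`, then `cov(Y)^{-1/2}` is an
orthogonalizer of `X`: the columns of `cov(Y)^{-1/2}·A` are orthogonal. -/
theorem stmt9 {n : ℕ} {Ω : Type*} [MeasureSpace Ω] [IsProbabilityMeasure (volume : Measure Ω)]
    (S : Ω → Fin n → ℝ) (hSmeas : Measurable S)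
    (hSsym : Measure.map (fun ω => -(S ω)) volume = Measure.map S volume)
    (hSindep : iIndepFun (fun i ω => S ω i) volume)
    (hSint : ∀ i, Integrable (fun ω => |S ω i|))
    (hSpos : ∀ i, 0 < ∫ ω, |S ω i|)
    (A : Matrix (Fin n) (Fin n) ℝ) (hA : IsUnit A.det)
    (X : Ω → Fin n → ℝ) (hX : X = fun ω => A.mulVec (S ω))
    (Y : Ω → Fin n → ℝ) (hYmeas : Measurable Y)
    (hY : Measure.map Y volume
      = (volume (centroidBody X))⁻¹ • volume.restrict (centroidBody X))
    (B : Matrix (Fin n) (Fin n) ℝ) (hBsym : B.IsSymm) (hBpos : B.PosDef)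
    (hBsq : B * B = (covMatrix (Measure.map Y volume))⁻¹) :
    ∀ i j : Fin n, i ≠ j → ((B * A)ᵀ * (B * A)) i j = 0 := by
  intro i j hij
  set μ : Measure (Fin n → ℝ) := Measure.map Y volume with hμ
  haveI : IsProbabilityMeasure μ := Measure.isProbabilityMeasure_map hYmeas.aemeasurable
  set C : Matrix (Fin n) (Fin n) ℝ := covMatrix μ with hCdef
  have hAT : IsUnit Aᵀ.det := by rwa [Matrix.det_transpose]
  -- a.e. bound on coordinates
  have hbound : ∀ᵐ x ∂μ, ∀ k, |x k| ≤ ∫ ω, |X ω ⬝ᵥ Pi.single k 1| := by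
    rw [hY]
    refine Measure.ae_smul_measure ?_ _
    filter_upwards [ae_restrict_mem (centroid_measurable X)] with x hx
    exact fun k => centroid_coord_bound X hx k
  -- invariance of the covariance matrix under each flip
  have hflip : ∀ a : Fin n,
      C = (A * Matrix.diagonal (fun k => if k = a then (-1:ℝ) else 1) * A⁻¹) * C *
        (A * Matrix.diagonal (fun k => if k = a then (-1:ℝ) else 1) * A⁻¹)ᵀ := by
    intro a
    exact cov_invariant μ _ hbound _
      (map_R_mu S hSmeas hSsym hSindep A hA X hX Y hY a)
  -- MM := A⁻¹ C (Aᵀ)⁻¹ has zero off-diagonal entries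
  set MM : Matrix (Fin n) (Fin n) ℝ := A⁻¹ * C * (Aᵀ)⁻¹ with hMM
  have hMMoff : ∀ a b : Fin n, a ≠ b → MM a b = 0 := by
    intro a b hab
    set F : Matrix (Fin n) (Fin n) ℝ := Matrix.diagonal (fun k => if k = a then (-1:ℝ) else 1)
      with hF
    have hFT : Fᵀ = F := Matrix.diagonal_transpose _
    have hRT : (A * F * A⁻¹)ᵀ = (Aᵀ)⁻¹ * F * Aᵀ := by
      rw [Matrix.transpose_mul, Matrix.transpose_mul, hFT, Matrix.transpose_nonsing_inv,
        Matrix.mul_assoc]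
    have key : MM = F * MM * F := by
      calc MM = A⁻¹ * C * (Aᵀ)⁻¹ := hMM
        _ = A⁻¹ * ((A * F * A⁻¹) * C * ((Aᵀ)⁻¹ * F * Aᵀ)) * (Aᵀ)⁻¹ := by
            rw [← hRT, ← hflip a]
        _ = (A⁻¹ * A) * F * (A⁻¹ * C * (Aᵀ)⁻¹) * F * (Aᵀ * (Aᵀ)⁻¹) := by
            simp only [Matrix.mul_assoc]
        _ = F * MM * F := by
            rw [Matrix.nonsing_inv_mul A hA, Matrix.mul_nonsing_inv Aᵀ hAT, hMM]
            simp only [Matrix.one_mul, Matrix.mul_one]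
    have h1 : (F * MM * F) a b = -(MM a b) := by
      rw [Matrix.mul_assoc, hF, Matrix.diagonal_mul, Matrix.mul_diagonal,
        if_pos rfl, if_neg (Ne.symm hab)]
      ring
    have h2 : MM a b = (F * MM * F) a b := congrFun (congrFun key a) b
    rw [h1] at h2
    linarith
  -- now the final linear algebra
  have hMMdiag : MM = Matrix.diagonal (fun k => MM k k) := by
    ext a b
    by_cases hab : a = b
    · subst hab; rw [Matrix.diagonal_apply_eq]
    · rw [hMMoff a b hab, Matrix.diagonal_apply_ne _ hab]
  have hCfact : C = A * MM * Aᵀ := by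
    rw [hMM]
    calc C = (A * A⁻¹) * C * ((Aᵀ)⁻¹ * Aᵀ) := by
          rw [Matrix.mul_nonsing_inv A hA, Matrix.nonsing_inv_mul Aᵀ hAT]
          simp only [Matrix.one_mul, Matrix.mul_one]
      _ = A * (A⁻¹ * C * (Aᵀ)⁻¹) * Aᵀ := by simp only [Matrix.mul_assoc]
  have hgoal : (B * A)ᵀ * (B * A) = Aᵀ * C⁻¹ * A := by
    rw [Matrix.transpose_mul, hBsym.eq]
    calc Aᵀ * B * (B * A) = Aᵀ * (B * B) * A := by simp only [Matrix.mul_assoc]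
      _ = Aᵀ * C⁻¹ * A := by rw [hBsq]
  have hinvfact : Aᵀ * C⁻¹ * A = MM⁻¹ := by
    rw [hCfact, Matrix.mul_inv_rev, Matrix.mul_inv_rev]
    calc Aᵀ * ((Aᵀ)⁻¹ * (MM⁻¹ * A⁻¹)) * A
        = (Aᵀ * (Aᵀ)⁻¹) * MM⁻¹ * (A⁻¹ * A) := by simp only [Matrix.mul_assoc]
      _ = MM⁻¹ := by
          rw [Matrix.mul_nonsing_inv Aᵀ hAT, Matrix.nonsing_inv_mul A hA]
          simp only [Matrix.one_mul, Matrix.mul_one]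
  rw [hgoal, hinvfact, hMMdiag, Matrix.inv_diagonal]
  exact Matrix.diagonal_apply_ne _ hij
end

section
/- Let K ⊆ R^n be an absolutely symmetric convex body containing the segment [−e_1, e_1], and let X = (X_1,...,X_n) be uniformly distributed in K. Then Var(X_1) ≥ 1/(n+1)². -/
/-!
Write `n = m + 1` and let `F t` be the `m`-dimensional volume of the section
`{x ∈ K | x₁ = t}`. Absolute symmetry makes `F` even, so `X₁` is centred, and together with
convexity it gives `F t ≤ F 0`. Since `K` contains `e₁` and the central section, it contains the
cone over that section with apex `e₁`, so `F t ≥ (1 - t)ᵐ F 0` on `[0, 1]`. The weight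
`t² - 1/(m+2)²` is negative only on `[0, 1/(m+2))`, so these two bounds reduce
`∫ (t² - 1/(m+2)²) F t ≥ 0` to an explicit one-variable integral, which is nonnegative because
`(1 + 1/(m+1))^(m+1) ≤ e < 3`.
-/

open MeasureTheory

section OneDimensional

open Set

theorem inv_three_le_pow_div (m : ℕ) :
    (1 : ℝ) / 3 ≤ (((m : ℝ) + 1) / ((m : ℝ) + 2)) ^ (m + 1) := by
  have hbase : ((m : ℝ) + 1) / ((m : ℝ) + 2) = (1 + (((m + 1 : ℕ) : ℝ))⁻¹)⁻¹ := by
    push_cast; field_simp; ring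
  have hexp : (1 + (((m + 1 : ℕ) : ℝ))⁻¹) ^ (m + 1) ≤ 3 :=
    Real.one_add_inv_pow_le_exp.trans (Real.exp_one_lt_d9.le.trans (by norm_num))
  rw [hbase, inv_pow, one_div]
  exact inv_anti₀ (by positivity) hexp

theorem integral_sq_sub_sq_mul_one_sub_pow (m : ℕ) :
    ∫ t in (1 / ((m : ℝ) + 2))..1, (t ^ 2 - (1 / ((m : ℝ) + 2)) ^ 2) * (1 - t) ^ m
      = 4 * (((m : ℝ) + 1) / ((m : ℝ) + 2)) ^ (m + 1) /
          (((m : ℝ) + 2) ^ 2 * ((m : ℝ) + 3)) := by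
  set s : ℝ := 1 / ((m : ℝ) + 2)
  set a : ℝ := ((m : ℝ) + 1) / ((m : ℝ) + 2)
  have ha : 1 - s = a := by simp only [s, a]; field_simp; ring
  have hsub : ∫ t in s..1, (t ^ 2 - s ^ 2) * (1 - t) ^ m
      = ∫ u in (0 : ℝ)..a, ((1 - s ^ 2) * u ^ m - 2 * u ^ (m + 1) + u ^ (m + 2)) := by
    rw [← ha, ← sub_self (1 : ℝ), ← intervalIntegral.integral_comp_sub_left]
    congr 1; ext t; ring
  rw [hsub, intervalIntegral.integral_add, intervalIntegral.integral_sub,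
    intervalIntegral.integral_const_mul, intervalIntegral.integral_const_mul,
    integral_pow, integral_pow, integral_pow]
  · have e2 : a ^ (m + 2 + 1) = a ^ (m + 1) * a ^ 2 := by ring
    simp only [ne_eq, add_eq_zero, one_ne_zero, and_false, not_false_eq_true, zero_pow,
      sub_zero, pow_succ a (m + 1), e2, Nat.cast_add, Nat.cast_one, Nat.cast_ofNat]
    generalize a ^ (m + 1) = b
    simp only [s, a]
    field_simp
    ring
  all_goals first
    | exact (intervalIntegral.intervalIntegrable_pow _).const_mul _
    | exact intervalIntegral.intervalIntegrable_pow _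
    | exact ((intervalIntegral.intervalIntegrable_pow _).const_mul _).sub
        ((intervalIntegral.intervalIntegrable_pow _).const_mul _)

theorem two_div_three_mul_pow_three_le_integral (m : ℕ) :
    2 / 3 * (1 / ((m : ℝ) + 2)) ^ 3 ≤
      ∫ t in (1 / ((m : ℝ) + 2))..1, (t ^ 2 - (1 / ((m : ℝ) + 2)) ^ 2) * (1 - t) ^ m := by
  rw [integral_sq_sub_sq_mul_one_sub_pow, div_pow, one_pow, le_div_iff₀ (by positivity)]
  have := inv_three_le_pow_div m
  have hm : (0 : ℝ) ≤ m := m.cast_nonneg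
  field_simp
  nlinarith

theorem setIntegral_Ioi_sq_sub_mul_nonneg (m : ℕ) {F : ℝ → ℝ} (hF0 : ∀ t, 0 ≤ F t)
    (hFle : ∀ t, F t ≤ F 0) (hFge : ∀ t ∈ Icc (0 : ℝ) 1, (1 - t) ^ m * F 0 ≤ F t)
    (hint : IntegrableOn (fun t => (t ^ 2 - (1 / ((m : ℝ) + 2)) ^ 2) * F t) (Ioi 0)) :
    0 ≤ ∫ t in Ioi 0, (t ^ 2 - (1 / ((m : ℝ) + 2)) ^ 2) * F t := by
  set s : ℝ := 1 / ((m : ℝ) + 2)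
  have hs0 : 0 ≤ s := by positivity
  have hs1 : s ≤ 1 := by rw [div_le_one (by positivity)]; linarith [m.cast_nonneg (α := ℝ)]
  have hintegrable : ∀ a b, 0 ≤ a → a ≤ b →
      IntervalIntegrable (fun t => (t ^ 2 - s ^ 2) * F t) volume a b := fun a b ha hab =>
    (intervalIntegrable_iff_integrableOn_Ioc_of_le hab).2
      (hint.mono_set fun t ht => ha.trans_lt ht.1)
  have hlow : F 0 * (s ^ 3 / 3 - s ^ 3) ≤ ∫ t in (0 : ℝ)..s, (t ^ 2 - s ^ 2) * F t := by
    calc F 0 * (s ^ 3 / 3 - s ^ 3) = ∫ t in (0 : ℝ)..s, (t ^ 2 - s ^ 2) * F 0 := by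
          simp [intervalIntegral.integral_mul_const, integral_pow]; ring
      _ ≤ _ := intervalIntegral.integral_mono_on hs0
          ((by fun_prop : Continuous _).intervalIntegrable _ _) (hintegrable 0 s le_rfl hs0)
          fun t ht => mul_le_mul_of_nonpos_left (hFle t) (by nlinarith [ht.1, ht.2])
  have hmid : (∫ t in s..1, (t ^ 2 - s ^ 2) * (1 - t) ^ m) * F 0 ≤
      ∫ t in s..1, (t ^ 2 - s ^ 2) * F t := by
    rw [← intervalIntegral.integral_mul_const]
    refine intervalIntegral.integral_mono_on hs1
      ((by fun_prop : Continuous _).intervalIntegrable _ _) (hintegrable s 1 hs0 hs1) fun t ht => ?_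
    rw [mul_assoc]
    exact mul_le_mul_of_nonneg_left (hFge t ⟨hs0.trans ht.1, ht.2⟩) (by nlinarith [ht.1])
  have hhigh : 0 ≤ ∫ t in Ioi (1 : ℝ), (t ^ 2 - s ^ 2) * F t :=
    setIntegral_nonneg measurableSet_Ioi fun t (ht : 1 < t) =>
      mul_nonneg (by nlinarith) (hF0 t)
  rw [← intervalIntegral.integral_interval_add_Ioi hint
      (hint.mono_set (Ioi_subset_Ioi zero_le_one)),
    ← intervalIntegral.integral_add_adjacent_intervals (hintegrable 0 s le_rfl hs0)
      (hintegrable s 1 hs0 hs1)]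
  have := two_div_three_mul_pow_three_le_integral m
  nlinarith [hF0 0]

theorem integral_mul_eq_zero_of_even {F : ℝ → ℝ} (heven : ∀ t, F (-t) = F t) :
    ∫ t, t * F t = 0 := by
  have h := integral_neg_eq_self (fun t => t * F t) volume
  simp only [heven, neg_mul, integral_neg] at h
  linarith

theorem setIntegral_Iic_zero_eq_setIntegral_Ioi_zero_of_even {E : Type*} [NormedAddCommGroup E]
    [NormedSpace ℝ E] {G : ℝ → E} (heven : ∀ t, G (-t) = G t) :
    ∫ t in Iic 0, G t = ∫ t in Ioi 0, G t := by
  simpa only [neg_zero, heven] using integral_comp_neg_Iic 0 G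

theorem integral_sq_sub_mul_nonneg_of_even (m : ℕ) {F : ℝ → ℝ} (heven : ∀ t, F (-t) = F t)
    (hF0 : ∀ t, 0 ≤ F t) (hFle : ∀ t, F t ≤ F 0)
    (hFge : ∀ t ∈ Icc (0 : ℝ) 1, (1 - t) ^ m * F 0 ≤ F t)
    (hint : Integrable (fun t => (t ^ 2 - (1 / ((m : ℝ) + 2)) ^ 2) * F t)) :
    0 ≤ ∫ t, (t ^ 2 - (1 / ((m : ℝ) + 2)) ^ 2) * F t := by
  have hIic := setIntegral_Iic_zero_eq_setIntegral_Ioi_zero_of_even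
    (G := fun t => (t ^ 2 - (1 / ((m : ℝ) + 2)) ^ 2) * F t)
    fun t => by simp only [neg_sq, heven]
  have hhalf := setIntegral_Ioi_sq_sub_mul_nonneg m hF0 hFle hFge hint.integrableOn
  rw [← intervalIntegral.integral_Iic_add_Ioi hint.integrableOn hint.integrableOn, hIic]
  positivity

end OneDimensional

section CoordSlice

open Set Pointwise

variable {m : ℕ} (K : Set (Fin (m + 1) → ℝ)) (i : Fin (m + 1))

def coordSlice (t : ℝ) : Set (Fin m → ℝ) := {y | i.insertNth t y ∈ K}

variable {K i}

theorem Fin.insertNth_smul_add_smul {R : Type*} [Semiring R] (a b t t' : R)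
    (y y' : Fin m → R) :
    a • i.insertNth t y + b • i.insertNth t' y' =
      i.insertNth (a * t + b * t') (a • y + b • y') := by
  ext j
  cases j using Fin.succAboveCases i <;> simp

theorem Convex.smul_add_smul_mem_coordSlice (hK : Convex ℝ K) {t t' : ℝ} {y y' : Fin m → ℝ}
    (hy : y ∈ coordSlice K i t) (hy' : y' ∈ coordSlice K i t') {a b : ℝ} (ha : 0 ≤ a)
    (hb : 0 ≤ b) (hab : a + b = 1) : a • y + b • y' ∈ coordSlice K i (a * t + b * t') := by
  have := hK hy hy' ha hb hab
  rwa [Fin.insertNth_smul_add_smul] at this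

theorem coordSlice_subset_coordSlice_neg
    (hsym : ∀ ε : Fin (m + 1) → ℝ, (∀ j, ε j = 1 ∨ ε j = -1) →
      ∀ x ∈ K, (fun j => ε j * x j) ∈ K)
    (t : ℝ) : coordSlice K i t ⊆ coordSlice K i (-t) := by
  intro y hy
  let ε : Fin (m + 1) → ℝ := i.insertNth (-1) 1
  have := hsym ε (fun j => by cases j using Fin.succAboveCases i <;> simp [ε]) _ hy
  show i.insertNth (-t) y ∈ K
  convert this using 1
  ext j; cases j using Fin.succAboveCases i <;> simp [ε]

theorem Convex.coordSlice_subset_coordSlice_zero (hK : Convex ℝ K)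
    (hneg : ∀ t, coordSlice K i t ⊆ coordSlice K i (-t)) (t : ℝ) :
    coordSlice K i t ⊆ coordSlice K i 0 := by
  intro y hy
  have := hK.smul_add_smul_mem_coordSlice hy (hneg t hy) (a := 1 / 2) (b := 1 / 2)
    (by norm_num) (by norm_num) (by norm_num)
  convert this using 2 <;> first | module | ring

theorem Convex.one_sub_smul_coordSlice_zero_subset (hK : Convex ℝ K) (h1 : i.insertNth 1 0 ∈ K)
    {τ : ℝ} (hτ : τ ∈ Icc (0 : ℝ) 1) :
    (1 - τ) • coordSlice K i 0 ⊆ coordSlice K i τ := by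
  rintro _ ⟨y, hy, rfl⟩
  have := hK.smul_add_smul_mem_coordSlice hy (show (0 : Fin m → ℝ) ∈ coordSlice K i 1 from h1)
    (sub_nonneg.2 hτ.2) hτ.1 (by ring)
  simpa using this

theorem coordSlice_subset_image (t : ℝ) :
    coordSlice K i t ⊆ (fun x j => x (i.succAbove j)) '' K :=
  fun y hy => ⟨_, hy, by simp⟩

theorem IsCompact.volume_coordSlice_lt_top (hK : IsCompact K) (t : ℝ) :
    volume (coordSlice K i t) < ⊤ :=
  (measure_mono (coordSlice_subset_image t)).trans_lt
    (hK.image (by fun_prop)).measure_lt_top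

theorem MeasurableSet.coordSlice (hK : MeasurableSet K) (t : ℝ) :
    MeasurableSet (coordSlice K i t) :=
  hK.preimage (continuous_const.finInsertNth i continuous_id).measurable

theorem Convex.one_sub_pow_mul_measureReal_coordSlice_zero_le (hK : Convex ℝ K)
    (hKc : IsCompact K) (h1 : i.insertNth 1 0 ∈ K) {τ : ℝ} (hτ : τ ∈ Icc (0 : ℝ) 1) :
    (1 - τ) ^ m * volume.real (coordSlice K i 0) ≤ volume.real (coordSlice K i τ) := by
  have h := measureReal_mono (μ := volume) (hK.one_sub_smul_coordSlice_zero_subset h1 hτ)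
    (hKc.volume_coordSlice_lt_top τ).ne
  rwa [measureReal_def, Measure.addHaar_smul, Module.finrank_fin_fun, ENNReal.toReal_mul,
    ENNReal.toReal_ofReal (abs_nonneg _), abs_of_nonneg (pow_nonneg (sub_nonneg.2 hτ.2) _)] at h

theorem Convex.measureReal_coordSlice_le_measureReal_coordSlice_zero (hK : Convex ℝ K)
    (hKc : IsCompact K) (hneg : ∀ t, coordSlice K i t ⊆ coordSlice K i (-t)) (t : ℝ) :
    volume.real (coordSlice K i t) ≤ volume.real (coordSlice K i 0) :=
  measureReal_mono (hK.coordSlice_subset_coordSlice_zero hneg t)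
    (hKc.volume_coordSlice_lt_top 0).ne

theorem integral_indicator_insertNth (hK : MeasurableSet K) (g : ℝ → ℝ) (t : ℝ) :
    ∫ y, K.indicator (fun x => g (x i)) (i.insertNth t y) =
      g t * volume.real (coordSlice K i t) := by
  have hslice : (fun y => K.indicator (fun x => g (x i)) (i.insertNth t y)) =
      (coordSlice K i t).indicator (fun _ => g t) := by
    ext y
    by_cases h : y ∈ coordSlice K i t
    · simp [indicator_of_mem h, indicator_of_mem (show i.insertNth t y ∈ K from h)]
    · simp [indicator_of_notMem h, indicator_of_notMem (show i.insertNth t y ∉ K from h)]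
  rw [hslice, integral_indicator_const _ (hK.coordSlice t), smul_eq_mul, mul_comm]

theorem integrable_indicator_insertNth (hK : MeasurableSet K) {g : ℝ → ℝ}
    (hg : IntegrableOn (fun x => g (x i)) K) :
    Integrable
      (fun p : ℝ × (Fin m → ℝ) => K.indicator (fun x => g (x i)) (i.insertNth p.1 p.2))
      (volume.prod volume) :=
  ((volume_preserving_piFinSuccAbove (fun _ : Fin (m + 1) => ℝ) i).symm.integrable_comp_emb
    (MeasurableEquiv.measurableEmbedding _)).2 ((integrable_indicator_iff hK).2 hg)

theorem integrable_mul_measureReal_coordSlice (hK : MeasurableSet K) {g : ℝ → ℝ}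
    (hg : IntegrableOn (fun x => g (x i)) K) :
    Integrable (fun t => g t * volume.real (coordSlice K i t)) := by
  simpa only [integral_indicator_insertNth hK] using
    (integrable_indicator_insertNth hK hg).integral_prod_left

theorem setIntegral_eq_integral_mul_measureReal_coordSlice (hK : MeasurableSet K) {g : ℝ → ℝ}
    (hg : IntegrableOn (fun x => g (x i)) K) :
    ∫ x in K, g (x i) = ∫ t, g t * volume.real (coordSlice K i t) := by
  rw [← integral_indicator hK,
    ← (volume_preserving_piFinSuccAbove (fun _ : Fin (m + 1) => ℝ) i).symm.integral_comp',
    Measure.volume_eq_prod]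
  exact (integral_prod _ (integrable_indicator_insertNth hK hg)).trans
    (by simp only [integral_indicator_insertNth hK])

theorem coordSlice_neg_eq (hneg : ∀ t, coordSlice K i t ⊆ coordSlice K i (-t)) (t : ℝ) :
    coordSlice K i (-t) = coordSlice K i t :=
  ((hneg (-t)).trans_eq (by rw [neg_neg])).antisymm (hneg t)

theorem IsCompact.setIntegral_eval_eq_zero (hKc : IsCompact K)
    (hneg : ∀ t, coordSlice K i t ⊆ coordSlice K i (-t)) :
    ∫ x in K, x i = 0 :=
  (setIntegral_eq_integral_mul_measureReal_coordSlice hKc.isClosed.measurableSet (g := id)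
    ((continuous_apply i).continuousOn.integrableOn_compact hKc)).trans
    (integral_mul_eq_zero_of_even fun t => by rw [coordSlice_neg_eq hneg])

theorem Convex.mul_measureReal_le_setIntegral_sq (hK : Convex ℝ K) (hKc : IsCompact K)
    (hneg : ∀ t, coordSlice K i t ⊆ coordSlice K i (-t)) (h1 : i.insertNth 1 0 ∈ K) :
    (1 / ((m : ℝ) + 2)) ^ 2 * volume.real K ≤ ∫ x in K, x i ^ 2 := by
  set c : ℝ := (1 / ((m : ℝ) + 2)) ^ 2
  have hKm : MeasurableSet K := hKc.isClosed.measurableSet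
  have hsq : IntegrableOn (fun x => x i ^ 2) K :=
    ((continuous_apply i).pow 2).continuousOn.integrableOn_compact hKc
  have hconst : IntegrableOn (fun _ => c) K := integrableOn_const hKc.measure_lt_top.ne
  have hg : IntegrableOn (fun x => x i ^ 2 - c) K := hsq.sub hconst
  have hnonneg : 0 ≤ ∫ x in K, (x i ^ 2 - c) := by
    rw [setIntegral_eq_integral_mul_measureReal_coordSlice hKm (g := fun t => t ^ 2 - c) hg]
    exact integral_sq_sub_mul_nonneg_of_even m (fun t => by rw [coordSlice_neg_eq hneg])
      (fun t => measureReal_nonneg)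
      (hK.measureReal_coordSlice_le_measureReal_coordSlice_zero hKc hneg)
      (fun t ht => hK.one_sub_pow_mul_measureReal_coordSlice_zero_le hKc h1 ht)
      (integrable_mul_measureReal_coordSlice hKm hg)
  rwa [integral_sub hsq hconst, setIntegral_const, smul_eq_mul, sub_nonneg,
    mul_comm] at hnonneg

end CoordSlice

theorem integral_inv_smul_restrict {α : Type*} [MeasurableSpace α] (μ : Measure α) (s : Set α)
    (f : α → ℝ) :
    ∫ x, f x ∂((μ s)⁻¹ • μ.restrict s) = (μ.real s)⁻¹ * ∫ x in s, f x ∂μ := by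
  rw [integral_smul_measure, ENNReal.toReal_inv, smul_eq_mul, measureReal_def]

/-- if `K ⊆ ℝⁿ` is an absolutely symmetric convex body containing the
segment `[-e₁, e₁]` and `X` is uniformly distributed in `K`, then `Var(X₁) ≥ 1/(n+1)²`. -/
theorem stmt10 {n : ℕ} (hn : 0 < n) (K : Set (Fin n → ℝ))
    (hKconv : Convex ℝ K) (hKcomp : IsCompact K) (hKint : (interior K).Nonempty)
    (hKsym : ∀ ε : Fin n → ℝ, (∀ i, ε i = 1 ∨ ε i = -1) →
      ∀ x ∈ K, (fun i => ε i * x i) ∈ K)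
    (e₁ : Fin n → ℝ) (he₁ : e₁ = Pi.single (⟨0, hn⟩ : Fin n) (1 : ℝ))
    (hseg : segment ℝ (-e₁) e₁ ⊆ K) :
    (1 : ℝ) / ((n : ℝ) + 1) ^ 2 ≤
      (∫ x, (x ⟨0, hn⟩) ^ 2 ∂((volume K)⁻¹ • volume.restrict K))
        - (∫ x, x ⟨0, hn⟩ ∂((volume K)⁻¹ • volume.restrict K)) ^ 2 := by
  obtain ⟨m, rfl⟩ : ∃ m, n = m + 1 := ⟨n - 1, by omega⟩
  set i : Fin (m + 1) := ⟨0, hn⟩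
  have hneg : ∀ t, coordSlice K i t ⊆ coordSlice K i (-t) :=
    coordSlice_subset_coordSlice_neg hKsym
  have he₁K : i.insertNth 1 0 ∈ K := by
    rw [Fin.insertNth_zero_right, ← he₁]
    exact hseg (right_mem_segment ℝ _ _)
  have hV : 0 < volume.real K := ENNReal.toReal_pos
    (isOpen_interior.measure_pos volume hKint |>.trans_le (measure_mono interior_subset)).ne'
    hKcomp.measure_lt_top.ne
  have hc : (1 : ℝ) / (((m + 1 : ℕ) : ℝ) + 1) ^ 2 = (1 / ((m : ℝ) + 2)) ^ 2 := by
    push_cast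
    rw [div_pow, one_pow]
    ring
  rw [integral_inv_smul_restrict, integral_inv_smul_restrict,
    hKcomp.setIntegral_eval_eq_zero hneg, mul_zero, zero_pow two_ne_zero, sub_zero, hc,
    le_inv_mul_iff₀ hV, mul_comm]
  exact hKconv.mul_measureReal_le_setIntegral_sq hKcomp hneg he₁K
end

section
/- Let X be a symmetric real random variable with density ρ_X such that E[X⁴] = ∞. For R > 0 let X_R be the Gaussian damping of X, i.e., the random variable with density proportional to ρ_X(x)·e^{−x²/R²}. Then cum₄(X_R) = E[X_R⁴] − 3(E[X_R²])² → ∞ as R → ∞. -/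
open MeasureTheory Filter
open Topology

private lemma aux_mul_exp_neg_le_one {t : ℝ} (ht : 0 ≤ t) : t * Real.exp (-t) ≤ 1 := by
  have h1 : t + 1 ≤ Real.exp t := Real.add_one_le_exp t
  have h2 : Real.exp (-t) * Real.exp t = 1 := by rw [← Real.exp_add]; simp
  nlinarith [Real.exp_pos (-t), Real.exp_pos t]

private lemma aux_sq_mul_exp_neg_le_four {t : ℝ} (ht : 0 ≤ t) : t ^ 2 * Real.exp (-t) ≤ 4 := by
  have h1 : t / 2 * Real.exp (-(t / 2)) ≤ 1 := aux_mul_exp_neg_le_one (by linarith)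
  have h2 : Real.exp (-(t / 2)) * Real.exp (-(t / 2)) = Real.exp (-t) := by
    rw [← Real.exp_add]; ring_nf
  nlinarith [Real.exp_pos (-(t / 2)), mul_nonneg ht (Real.exp_pos (-(t/2))).le,
    sq_nonneg (t * Real.exp (-(t/2)))]


private lemma aux_arith1 (a j1 j2 i4 cc : ℝ) (ha : 0 ≤ a) (h1 : 0 ≤ j1) (h2 : 0 ≤ j2)
    (hj1 : j1 ≤ a ^ 2) (hj2 : j2 ^ 2 ≤ cc ^ 2 / 24 * i4) :
    (j1 + j2) ^ 2 ≤ 2 * a ^ 4 + cc ^ 2 / 12 * i4 := by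
  nlinarith [sq_nonneg (j2 - a ^ 2), sq_nonneg a, mul_nonneg h1 h2,
    mul_nonneg (mul_nonneg ha ha) (mul_nonneg ha ha)]

private lemma aux_arith2 (C cc A K I2 I4 M' : ℝ) (hc : 0 < cc) (hKc : cc ≤ K)
    (hK1 : K ≤ 1) (hI4 : 0 ≤ I4) (hI2 : 0 ≤ I2)
    (hsq : I2 ^ 2 ≤ 2 * A ^ 4 + cc ^ 2 / 12 * I4)
    (hM : (4/3) * (C + 6 * (A ^ 4 / cc ^ 2)) + 1 ≤ M') (hMI : M' ≤ I4)
    (h0M : 0 ≤ M') : C ≤ I4 / K - 3 * (I2 / K) ^ 2 := by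
  have hK : 0 < K := lt_of_lt_of_le hc hKc
  have h1 : I4 ≤ I4 / K := by
    rw [le_div_iff₀ hK]
    nlinarith
  have h2 : I2 / K ≤ I2 / cc := by
    rw [div_le_div_iff₀ hK hc]
    nlinarith
  have h3 : (I2 / K) ^ 2 ≤ I2 ^ 2 / cc ^ 2 := by
    rw [← div_pow]
    exact pow_le_pow_left₀ (div_nonneg hI2 hK.le) h2 2
  have h6 : I2 ^ 2 / cc ^ 2 ≤ 2 * (A ^ 4 / cc ^ 2) + I4 / 12 := by
    rw [div_le_iff₀ (by positivity : (0:ℝ) < cc ^ 2)]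
    have expand : (2 * (A ^ 4 / cc ^ 2) + I4 / 12) * cc ^ 2
        = 2 * A ^ 4 + cc ^ 2 / 12 * I4 := by
      field_simp
    rw [expand]
    exact hsq
  have hP : 0 ≤ A ^ 4 / cc ^ 2 := by positivity
  linarith [h1, h3, h6, hM, hMI, hP]

/-- for a symmetric real random variable with density `ρ` and infinite
fourth moment, the fourth cumulant of its Gaussian damping `X_R` (density proportional
to `ρ(x)e^{−x²/R²}`) tends to infinity as `R → ∞`. Here
`E[X_R^k] = (∫ x^k ρ(x) e^{−x²/R²} dx)/K_R` with `K_R = ∫ ρ(x) e^{−x²/R²} dx`, and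
`cum₄(X_R) = E[X_R⁴] − 3(E[X_R²])²`. -/
theorem stmt15 (ρ : ℝ → ℝ) (hmeas : Measurable ρ) (hnonneg : ∀ x, 0 ≤ ρ x)
    (hint : Integrable ρ) (hprob : (∫ x, ρ x) = 1)
    (heven : ∀ x, ρ (-x) = ρ x)
    (hinf : (∫⁻ x, ENNReal.ofReal (x ^ 4 * ρ x)) = ⊤) :
    Tendsto (fun R : ℝ =>
        (∫ x, x ^ 4 * ρ x * Real.exp (-x ^ 2 / R ^ 2))
            / (∫ x, ρ x * Real.exp (-x ^ 2 / R ^ 2))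
          - 3 * ((∫ x, x ^ 2 * ρ x * Real.exp (-x ^ 2 / R ^ 2))
            / (∫ x, ρ x * Real.exp (-x ^ 2 / R ^ 2))) ^ 2)
      atTop atTop := by
  -- basic facts about the weight
  have hwcont : ∀ R : ℝ, Continuous fun x : ℝ => Real.exp (-x ^ 2 / R ^ 2) :=
    fun R => Real.continuous_exp.comp ((continuous_pow 2).neg.div_const _)
  have hwpos : ∀ R x : ℝ, 0 < Real.exp (-x ^ 2 / R ^ 2) := fun R x => Real.exp_pos _
  have hwle1 : ∀ R x : ℝ, Real.exp (-x ^ 2 / R ^ 2) ≤ 1 := by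
    intro R x
    rw [← Real.exp_zero]
    apply Real.exp_le_exp.mpr
    have h1 : (0:ℝ) ≤ x ^ 2 / R ^ 2 := by positivity
    have h2 : -x ^ 2 / R ^ 2 = -(x ^ 2 / R ^ 2) := neg_div _ _
    linarith
  have hmeasw : ∀ R : ℝ, Measurable fun x : ℝ => ρ x * Real.exp (-x ^ 2 / R ^ 2) :=
    fun R => hmeas.mul (hwcont R).measurable
  have hInt0 : ∀ R : ℝ, Integrable fun x => ρ x * Real.exp (-x ^ 2 / R ^ 2) := by
    intro R
    refine hint.mono' (hmeasw R).aestronglyMeasurable ?_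
    refine Eventually.of_forall fun x => ?_
    rw [Real.norm_of_nonneg (mul_nonneg (hnonneg x) (hwpos R x).le)]
    exact mul_le_of_le_one_right (hnonneg x) (hwle1 R x)
  have hb2 : ∀ R : ℝ, 1 ≤ R → ∀ x : ℝ, x ^ 2 * Real.exp (-x ^ 2 / R ^ 2) ≤ R ^ 2 := by
    intro R hR x
    have hR2 : (0:ℝ) < R ^ 2 := by positivity
    have ht : (0:ℝ) ≤ x ^ 2 / R ^ 2 := by positivity
    have h := aux_mul_exp_neg_le_one ht
    have key : x ^ 2 * Real.exp (-(x ^ 2 / R ^ 2))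
        = R ^ 2 * (x ^ 2 / R ^ 2 * Real.exp (-(x ^ 2 / R ^ 2))) := by
      field_simp
    rw [neg_div, key]
    nlinarith
  have hb4 : ∀ R : ℝ, 1 ≤ R → ∀ x : ℝ, x ^ 4 * Real.exp (-x ^ 2 / R ^ 2) ≤ 4 * R ^ 4 := by
    intro R hR x
    have hR2 : (0:ℝ) < R ^ 2 := by positivity
    have ht : (0:ℝ) ≤ x ^ 2 / R ^ 2 := by positivity
    have h := aux_sq_mul_exp_neg_le_four ht
    have key : x ^ 4 * Real.exp (-(x ^ 2 / R ^ 2))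
        = R ^ 4 * ((x ^ 2 / R ^ 2) ^ 2 * Real.exp (-(x ^ 2 / R ^ 2))) := by
      field_simp
    rw [neg_div, key]
    nlinarith [pow_nonneg (le_of_lt (by positivity : (0:ℝ) < R)) 4]
  have hInt2 : ∀ R : ℝ, 1 ≤ R →
      Integrable fun x => x ^ 2 * ρ x * Real.exp (-x ^ 2 / R ^ 2) := by
    intro R hR
    refine (hint.const_mul (R ^ 2)).mono' ?_ ?_
    · exact (((measurable_id.pow_const 2).mul hmeas).mul
        (hwcont R).measurable).aestronglyMeasurable
    · refine Eventually.of_forall fun x => ?_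
      rw [Real.norm_of_nonneg (mul_nonneg (mul_nonneg (sq_nonneg x) (hnonneg x)) (hwpos R x).le)]
      calc x ^ 2 * ρ x * Real.exp (-x ^ 2 / R ^ 2)
          = x ^ 2 * Real.exp (-x ^ 2 / R ^ 2) * ρ x := by ring
        _ ≤ R ^ 2 * ρ x := mul_le_mul_of_nonneg_right (hb2 R hR x) (hnonneg x)
  have hInt4 : ∀ R : ℝ, 1 ≤ R →
      Integrable fun x => x ^ 4 * ρ x * Real.exp (-x ^ 2 / R ^ 2) := by
    intro R hR
    refine (hint.const_mul (4 * R ^ 4)).mono' ?_ ?_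
    · exact (((measurable_id.pow_const 4).mul hmeas).mul
        (hwcont R).measurable).aestronglyMeasurable
    · refine Eventually.of_forall fun x => ?_
      have h4 : (0:ℝ) ≤ x ^ 4 := by positivity
      rw [Real.norm_of_nonneg (mul_nonneg (mul_nonneg h4 (hnonneg x)) (hwpos R x).le)]
      calc x ^ 4 * ρ x * Real.exp (-x ^ 2 / R ^ 2)
          = x ^ 4 * Real.exp (-x ^ 2 / R ^ 2) * ρ x := by ring
        _ ≤ 4 * R ^ 4 * ρ x := mul_le_mul_of_nonneg_right (hb4 R hR x) (hnonneg x)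
  -- the constant c : lower bound for the normalisation for R ≥ 1
  set c : ℝ := ∫ x, ρ x * Real.exp (-x ^ 2 / (1:ℝ) ^ 2) with hc_def
  have hc_pos : 0 < c := by
    rcases lt_or_eq_of_le (integral_nonneg (f := fun x => ρ x * Real.exp (-x ^ 2 / (1:ℝ) ^ 2)) fun x =>
        mul_nonneg (hnonneg x) (hwpos 1 x).le) with h | h
    · exact h
    · exfalso
      have h0 : (fun x => ρ x * Real.exp (-x ^ 2 / (1:ℝ) ^ 2)) =ᵐ[volume] 0 :=
        (integral_eq_zero_iff_of_nonneg
          (fun x => mul_nonneg (hnonneg x) (hwpos 1 x).le) (hInt0 1)).mp h.symm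
      have hρ0 : ρ =ᵐ[volume] (0 : ℝ → ℝ) := by
        filter_upwards [h0] with x hx
        exact (mul_eq_zero.mp hx).resolve_right (hwpos 1 x).ne'
      rw [integral_congr_ae hρ0] at hprob
      simp at hprob
  have hKge : ∀ R : ℝ, 1 ≤ R → c ≤ ∫ x, ρ x * Real.exp (-x ^ 2 / R ^ 2) := by
    intro R hR
    refine integral_mono (hInt0 1) (hInt0 R) fun x => ?_
    refine mul_le_mul_of_nonneg_left (Real.exp_le_exp.mpr ?_) (hnonneg x)
    rw [neg_div, neg_div, neg_le_neg_iff]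
    have h1 : (1:ℝ) ^ 2 ≤ R ^ 2 := by nlinarith
    exact div_le_div_of_nonneg_left (sq_nonneg x) (by norm_num) h1
  have hKle : ∀ R : ℝ, (∫ x, ρ x * Real.exp (-x ^ 2 / R ^ 2)) ≤ 1 := by
    intro R
    rw [← hprob]
    exact integral_mono (hInt0 R) hint fun x =>
      mul_le_of_le_one_right (hnonneg x) (hwle1 R x)
  -- the exhausting sequence of intervals
  set s : ℕ → Set ℝ := fun n => Set.Icc (-(n:ℝ)) n with hs_def
  have hsm : ∀ n, MeasurableSet (s n) := fun n => measurableSet_Icc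
  have hs_mono : Monotone s := by
    intro m n hmn
    apply Set.Icc_subset_Icc
    · exact neg_le_neg (Nat.cast_le.mpr hmn)
    · exact Nat.cast_le.mpr hmn
  have hsU : (⋃ n, s n) = Set.univ := by
    ext x
    simp only [Set.mem_iUnion, Set.mem_univ, iff_true, hs_def, Set.mem_Icc]
    obtain ⟨h1, h2⟩ := abs_le.mp (Nat.le_ceil |x|)
    exact ⟨⌈|x|⌉₊, h1, h2⟩
  -- choice of the tail cutoff N
  have htail : Tendsto (fun n : ℕ => ∫ x in s n, ρ x) atTop (𝓝 1) := by
    have h := tendsto_setIntegral_of_monotone hsm hs_mono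
      (by rw [hsU]; exact hint.integrableOn)
    rw [hsU] at h
    simpa [Measure.restrict_univ, hprob] using h
  have hNex : ∀ᶠ n : ℕ in atTop, 1 - c ^ 2 / 24 < ∫ x in s n, ρ x :=
    htail.eventually (eventually_gt_nhds (by nlinarith))
  obtain ⟨N, hN⟩ := hNex.exists
  have hε : ∫ x in (s N)ᶜ, ρ x ≤ c ^ 2 / 24 := by
    have hsplit : (∫ x in s N, ρ x) + ∫ x in (s N)ᶜ, ρ x = ∫ x, ρ x :=
      integral_add_compl (hsm N) hint
    rw [hprob] at hsplit
    linarith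
  set A : ℝ := (N : ℝ) with hA_def
  have hA0 : 0 ≤ A := Nat.cast_nonneg N
  -- blow-up of the truncated fourth moments
  have hIntOn : ∀ n : ℕ, IntegrableOn (fun x => x ^ 4 * ρ x) (s n) := by
    intro n
    refine (hint.restrict.const_mul ((n : ℝ) ^ 4)).mono' ?_ ?_
    · exact ((measurable_id.pow_const 4).mul hmeas).aestronglyMeasurable
    · rw [ae_restrict_iff' (hsm n)]
      refine Eventually.of_forall fun x hx => ?_
      have h4 : (0:ℝ) ≤ x ^ 4 := by positivity
      rw [Real.norm_of_nonneg (mul_nonneg h4 (hnonneg x))]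
      refine mul_le_mul_of_nonneg_right ?_ (hnonneg x)
      have h1 : |x| ≤ (n : ℝ) := abs_le.mpr ⟨hx.1, hx.2⟩
      calc x ^ 4 = |x ^ 4| := (abs_of_nonneg h4).symm
        _ = |x| ^ 4 := (pow_abs x 4).symm
        _ ≤ (n : ℝ) ^ 4 := pow_le_pow_left₀ (abs_nonneg x) h1 4
  have hM4big : ∀ M : ℝ, ∃ B : ℕ, M ≤ ∫ x in s B, x ^ 4 * ρ x := by
    intro M
    set G : ℕ → ℝ → ENNReal :=
      fun n => (s n).indicator fun x => ENNReal.ofReal (x ^ 4 * ρ x) with hG_def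
    have hGmeas : ∀ n, Measurable (G n) := fun n =>
      (ENNReal.measurable_ofReal.comp ((measurable_id.pow_const 4).mul hmeas)).indicator (hsm n)
    have hGmono : Monotone G := fun m n hmn =>
      Set.indicator_le_indicator_of_subset (hs_mono hmn) (fun x => zero_le)
    have hGsup : ∀ x, ⨆ n, G n x = ENNReal.ofReal (x ^ 4 * ρ x) := by
      intro x
      refine le_antisymm (iSup_le fun n => Set.indicator_le_self _ _ x) ?_
      have hx : x ∈ s ⌈|x|⌉₊ := by
        obtain ⟨h1, h2⟩ := abs_le.mp (Nat.le_ceil |x|)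
        exact ⟨h1, h2⟩
      refine le_iSup_of_le ⌈|x|⌉₊ ?_
      rw [hG_def]
      exact (Set.indicator_of_mem hx (fun y => ENNReal.ofReal (y ^ 4 * ρ y))).ge
    have hGlim : (⨆ n, ∫⁻ x, G n x) = ⊤ := by
      rw [← lintegral_iSup hGmeas hGmono]
      rw [← hinf]
      exact lintegral_congr hGsup
    have hlt : ENNReal.ofReal M < ⨆ n, ∫⁻ x, G n x := by
      rw [hGlim]; exact ENNReal.ofReal_lt_top
    obtain ⟨B, hB⟩ := lt_iSup_iff.mp hlt
    refine ⟨B, ?_⟩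
    by_contra hcon
    push_neg at hcon
    have hGB : ∫⁻ x, G B x = ∫⁻ x in s B, ENNReal.ofReal (x ^ 4 * ρ x) :=
      lintegral_indicator (hsm B) _
    have hre : ENNReal.ofReal (∫ x in s B, x ^ 4 * ρ x)
        = ∫⁻ x in s B, ENNReal.ofReal (x ^ 4 * ρ x) :=
      ofReal_integral_eq_lintegral_ofReal (hIntOn B)
        (Eventually.of_forall fun x => mul_nonneg (by positivity) (hnonneg x))
    have : ∫⁻ x, G B x ≤ ENNReal.ofReal M := by
      rw [hGB, ← hre]
      exact ENNReal.ofReal_le_ofReal hcon.le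
    exact absurd hB (not_lt.mpr this)
  -- Cauchy–Schwarz on the tail
  have hCS : ∀ R : ℝ, 1 ≤ R →
      (∫ x in (s N)ᶜ, x ^ 2 * ρ x * Real.exp (-x ^ 2 / R ^ 2)) ^ 2 ≤
      (∫ x in (s N)ᶜ, ρ x * Real.exp (-x ^ 2 / R ^ 2)) *
      (∫ x in (s N)ᶜ, x ^ 4 * ρ x * Real.exp (-x ^ 2 / R ^ 2)) := by
    intro R hR
    have hTm : MeasurableSet ((s N)ᶜ) := (hsm N).compl
    have hwnn : ∀ x, 0 ≤ ρ x * Real.exp (-x ^ 2 / R ^ 2) :=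
      fun x => mul_nonneg (hnonneg x) (hwpos R x).le
    have hf_meas : AEStronglyMeasurable
        (fun x => Real.sqrt (ρ x * Real.exp (-x ^ 2 / R ^ 2)))
        (volume.restrict ((s N)ᶜ)) :=
      (Real.continuous_sqrt.measurable.comp (hmeasw R)).aestronglyMeasurable
    have hg_meas : AEStronglyMeasurable
        (fun x => x ^ 2 * Real.sqrt (ρ x * Real.exp (-x ^ 2 / R ^ 2)))
        (volume.restrict ((s N)ᶜ)) :=
      ((measurable_id.pow_const 2).mul
        (Real.continuous_sqrt.measurable.comp (hmeasw R))).aestronglyMeasurable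
    have hfsq : ∀ x : ℝ, Real.sqrt (ρ x * Real.exp (-x ^ 2 / R ^ 2)) ^ (2:ℕ)
        = ρ x * Real.exp (-x ^ 2 / R ^ 2) := fun x => Real.sq_sqrt (hwnn x)
    have hgsq : ∀ x : ℝ, (x ^ 2 * Real.sqrt (ρ x * Real.exp (-x ^ 2 / R ^ 2))) ^ (2:ℕ)
        = x ^ 4 * ρ x * Real.exp (-x ^ 2 / R ^ 2) := by
      intro x
      rw [mul_pow, Real.sq_sqrt (hwnn x)]
      ring
    have htwo : (ENNReal.ofReal (2:ℝ)) = (2 : ENNReal) := by norm_num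
    have hf2 : MemLp (fun x => Real.sqrt (ρ x * Real.exp (-x ^ 2 / R ^ 2)))
        (ENNReal.ofReal (2:ℝ)) (volume.restrict ((s N)ᶜ)) := by
      rw [htwo]
      refine (memLp_two_iff_integrable_sq hf_meas).mpr ?_
      exact (hInt0 R).restrict.congr (Eventually.of_forall fun x => (hfsq x).symm)
    have hg2 : MemLp (fun x => x ^ 2 * Real.sqrt (ρ x * Real.exp (-x ^ 2 / R ^ 2)))
        (ENNReal.ofReal (2:ℝ)) (volume.restrict ((s N)ᶜ)) := by
      rw [htwo]
      refine (memLp_two_iff_integrable_sq hg_meas).mpr ?_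
      exact (hInt4 R hR).restrict.congr (Eventually.of_forall fun x => (hgsq x).symm)
    have hpq : (2:ℝ).HolderConjugate 2 := Real.HolderConjugate.two_two
    have h := integral_mul_le_Lp_mul_Lq_of_nonneg hpq
      (Eventually.of_forall fun x => Real.sqrt_nonneg _)
      (Eventually.of_forall fun x => mul_nonneg (sq_nonneg x) (Real.sqrt_nonneg _))
      hf2 hg2
    have e2 : ∀ y : ℝ, y ^ (2:ℝ) = y ^ (2:ℕ) := fun y => by
      rw [show (2:ℝ) = ((2:ℕ):ℝ) by norm_num, Real.rpow_natCast]
    simp only [e2, hfsq, hgsq] at h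
    have efg : (fun a : ℝ => Real.sqrt (ρ a * Real.exp (-a ^ 2 / R ^ 2)) *
        (a ^ 2 * Real.sqrt (ρ a * Real.exp (-a ^ 2 / R ^ 2))))
        = fun a : ℝ => a ^ 2 * ρ a * Real.exp (-a ^ 2 / R ^ 2) := by
      funext a
      rw [show Real.sqrt (ρ a * Real.exp (-a ^ 2 / R ^ 2)) *
          (a ^ 2 * Real.sqrt (ρ a * Real.exp (-a ^ 2 / R ^ 2)))
          = a ^ 2 * (Real.sqrt (ρ a * Real.exp (-a ^ 2 / R ^ 2)) *
            Real.sqrt (ρ a * Real.exp (-a ^ 2 / R ^ 2))) by ring,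
        Real.mul_self_sqrt (hwnn a)]
      ring
    rw [efg, ← Real.sqrt_eq_rpow, ← Real.sqrt_eq_rpow] at h
    have h0 : 0 ≤ ∫ x in (s N)ᶜ, ρ x * Real.exp (-x ^ 2 / R ^ 2) :=
      integral_nonneg fun x => hwnn x
    have h4 : 0 ≤ ∫ x in (s N)ᶜ, x ^ 4 * ρ x * Real.exp (-x ^ 2 / R ^ 2) :=
      integral_nonneg fun x => mul_nonneg (mul_nonneg (by positivity) (hnonneg x)) (hwpos R x).le
    have h2 : 0 ≤ ∫ x in (s N)ᶜ, x ^ 2 * ρ x * Real.exp (-x ^ 2 / R ^ 2) :=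
      integral_nonneg fun x => mul_nonneg (mul_nonneg (sq_nonneg x) (hnonneg x)) (hwpos R x).le
    calc (∫ x in (s N)ᶜ, x ^ 2 * ρ x * Real.exp (-x ^ 2 / R ^ 2)) ^ 2
        ≤ (Real.sqrt (∫ x in (s N)ᶜ, ρ x * Real.exp (-x ^ 2 / R ^ 2)) *
           Real.sqrt (∫ x in (s N)ᶜ, x ^ 4 * ρ x * Real.exp (-x ^ 2 / R ^ 2))) ^ 2 :=
          pow_le_pow_left₀ h2 h 2
      _ = (∫ x in (s N)ᶜ, ρ x * Real.exp (-x ^ 2 / R ^ 2)) *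
          (∫ x in (s N)ᶜ, x ^ 4 * ρ x * Real.exp (-x ^ 2 / R ^ 2)) := by
          rw [mul_pow, Real.sq_sqrt h0, Real.sq_sqrt h4]
  -- main argument
  rw [tendsto_atTop]
  intro C
  obtain ⟨B, hB⟩ := hM4big (2 * max 0 ((4/3) * (C + 6 * (A ^ 4 / c ^ 2)) + 1))
  filter_upwards [eventually_ge_atTop (1:ℝ), eventually_ge_atTop (2 * (B:ℝ) + 1)]
    with R hR1 hRB
  set M' : ℝ := max 0 ((4/3) * (C + 6 * (A ^ 4 / c ^ 2)) + 1) with hM'_def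
  set K : ℝ := ∫ x, ρ x * Real.exp (-x ^ 2 / R ^ 2) with hK_def
  set I2 : ℝ := ∫ x, x ^ 2 * ρ x * Real.exp (-x ^ 2 / R ^ 2) with hI2_def
  set I4 : ℝ := ∫ x, x ^ 4 * ρ x * Real.exp (-x ^ 2 / R ^ 2) with hI4_def
  have hKc : c ≤ K := hKge R hR1
  have hKpos : 0 < K := lt_of_lt_of_le hc_pos hKc
  have hK1 : K ≤ 1 := hKle R
  have hI4nn : 0 ≤ I4 := integral_nonneg fun x =>
    mul_nonneg (mul_nonneg (by positivity) (hnonneg x)) (hwpos R x).le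
  have hI2nn : 0 ≤ I2 := integral_nonneg fun x =>
    mul_nonneg (mul_nonneg (sq_nonneg x) (hnonneg x)) (hwpos R x).le
  have hBnn : (0:ℝ) ≤ (B:ℝ) := Nat.cast_nonneg B
  -- lower bound on I4
  have hI4M : M' ≤ I4 := by
    have step1 : ∫ x in s B, (1/2 : ℝ) * (x ^ 4 * ρ x)
        ≤ ∫ x in s B, x ^ 4 * ρ x * Real.exp (-x ^ 2 / R ^ 2) := by
      refine setIntegral_mono_on ((hIntOn B).const_mul _)
        ((hInt4 R hR1).restrict) (hsm B) ?_
      intro x hx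
      have hxB : x ^ 2 ≤ (B:ℝ) ^ 2 := sq_le_sq' hx.1 hx.2
      have hle : x ^ 2 / R ^ 2 ≤ 1/2 := by
        rw [div_le_iff₀ (by positivity)]
        nlinarith
      have hwB : (1/2 : ℝ) ≤ Real.exp (-x ^ 2 / R ^ 2) := by
        rw [neg_div]
        linarith [Real.add_one_le_exp (-(x ^ 2 / R ^ 2))]
      have h4 : (0:ℝ) ≤ x ^ 4 * ρ x := mul_nonneg (by positivity) (hnonneg x)
      calc (1/2 : ℝ) * (x ^ 4 * ρ x) = x ^ 4 * ρ x * (1/2) := by ring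
        _ ≤ x ^ 4 * ρ x * Real.exp (-x ^ 2 / R ^ 2) :=
            mul_le_mul_of_nonneg_left hwB h4
    have step2 : ∫ x in s B, x ^ 4 * ρ x * Real.exp (-x ^ 2 / R ^ 2) ≤ I4 :=
      setIntegral_le_integral (hInt4 R hR1) (Eventually.of_forall fun x =>
        mul_nonneg (mul_nonneg (by positivity) (hnonneg x)) (hwpos R x).le)
    have step0 : (∫ x in s B, (1/2 : ℝ) * (x ^ 4 * ρ x))
        = (1/2 : ℝ) * ∫ x in s B, x ^ 4 * ρ x := integral_const_mul _ _
    rw [step0] at step1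
    linarith
  -- tail bounds
  have hT0 : ∫ x in (s N)ᶜ, ρ x * Real.exp (-x ^ 2 / R ^ 2) ≤ c ^ 2 / 24 := by
    refine le_trans ?_ hε
    exact integral_mono ((hInt0 R).restrict) hint.restrict fun x =>
      mul_le_of_le_one_right (hnonneg x) (hwle1 R x)
  have hT4 : ∫ x in (s N)ᶜ, x ^ 4 * ρ x * Real.exp (-x ^ 2 / R ^ 2) ≤ I4 :=
    setIntegral_le_integral (hInt4 R hR1) (Eventually.of_forall fun x =>
      mul_nonneg (mul_nonneg (by positivity) (hnonneg x)) (hwpos R x).le)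
  have hT0nn : 0 ≤ ∫ x in (s N)ᶜ, ρ x * Real.exp (-x ^ 2 / R ^ 2) :=
    integral_nonneg fun x => mul_nonneg (hnonneg x) (hwpos R x).le
  have hT4nn : 0 ≤ ∫ x in (s N)ᶜ, x ^ 4 * ρ x * Real.exp (-x ^ 2 / R ^ 2) :=
    integral_nonneg fun x =>
      mul_nonneg (mul_nonneg (by positivity) (hnonneg x)) (hwpos R x).le
  have hT2nn : 0 ≤ ∫ x in (s N)ᶜ, x ^ 2 * ρ x * Real.exp (-x ^ 2 / R ^ 2) :=
    integral_nonneg fun x =>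
      mul_nonneg (mul_nonneg (sq_nonneg x) (hnonneg x)) (hwpos R x).le
  have hCS' : (∫ x in (s N)ᶜ, x ^ 2 * ρ x * Real.exp (-x ^ 2 / R ^ 2)) ^ 2
      ≤ (c ^ 2 / 24) * I4 := by
    refine le_trans (hCS R hR1) ?_
    exact mul_le_mul hT0 hT4 hT4nn (by positivity)
  -- splitting I2
  have hI2split : (∫ x in s N, x ^ 2 * ρ x * Real.exp (-x ^ 2 / R ^ 2))
      + (∫ x in (s N)ᶜ, x ^ 2 * ρ x * Real.exp (-x ^ 2 / R ^ 2)) = I2 :=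
    integral_add_compl (hsm N) (hInt2 R hR1)
  have hI2Icc : ∫ x in s N, x ^ 2 * ρ x * Real.exp (-x ^ 2 / R ^ 2) ≤ A ^ 2 := by
    have step1 : ∫ x in s N, x ^ 2 * ρ x * Real.exp (-x ^ 2 / R ^ 2)
        ≤ ∫ x in s N, A ^ 2 * ρ x := by
      refine setIntegral_mono_on ((hInt2 R hR1).restrict)
        ((hint.const_mul _).restrict) (hsm N) ?_
      intro x hx
      have hxA : x ^ 2 ≤ A ^ 2 := sq_le_sq' hx.1 hx.2
      calc x ^ 2 * ρ x * Real.exp (-x ^ 2 / R ^ 2) ≤ x ^ 2 * ρ x * 1 :=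
            mul_le_mul_of_nonneg_left (hwle1 R x)
              (mul_nonneg (sq_nonneg x) (hnonneg x))
        _ = x ^ 2 * ρ x := by ring
        _ ≤ A ^ 2 * ρ x := mul_le_mul_of_nonneg_right hxA (hnonneg x)
    have step2 : ∫ x in s N, A ^ 2 * ρ x = A ^ 2 * ∫ x in s N, ρ x :=
      integral_const_mul _ _
    have step3 : ∫ x in s N, ρ x ≤ 1 := by
      rw [← hprob]
      exact setIntegral_le_integral hint (Eventually.of_forall hnonneg)
    have : A ^ 2 * ∫ x in s N, ρ x ≤ A ^ 2 * 1 :=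
      mul_le_mul_of_nonneg_left step3 (by positivity)
    rw [step2] at step1
    linarith
  have hI2Iccnn : 0 ≤ ∫ x in s N, x ^ 2 * ρ x * Real.exp (-x ^ 2 / R ^ 2) :=
    integral_nonneg fun x =>
      mul_nonneg (mul_nonneg (sq_nonneg x) (hnonneg x)) (hwpos R x).le
  -- final arithmetic
  set J2 : ℝ := ∫ x in (s N)ᶜ, x ^ 2 * ρ x * Real.exp (-x ^ 2 / R ^ 2) with hJ2_def
  set J1 : ℝ := ∫ x in s N, x ^ 2 * ρ x * Real.exp (-x ^ 2 / R ^ 2) with hJ1_def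
  have hI2sq : I2 ^ 2 ≤ 2 * A ^ 4 + c ^ 2 / 12 * I4 := by
    rw [← hI2split]
    exact aux_arith1 A J1 J2 I4 c hA0 hI2Iccnn hT2nn hI2Icc hCS'
  exact aux_arith2 C c A K I2 I4 M' hc_pos hKc hK1 hI4nn hI2nn hI2sq
    (le_max_right _ _) hI4M (by positivity)
end
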